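/- arXiv:2111.05457 — 5 statements merged into one kernel-verified Lean document; each statement's English description precedes it below -/
import Mathlib

section
/- Let x be a point in the Euclidean plane ℝ² and let S be a finite set of points in ℝ² such that every s ∈ S satisfies 0 < dist(s, x) ≤ 1, and any two distinct points of S are at Euclidean distance strictly greater than 1 from each other. Then S contains at most 5 points. -/
/-!
Identify the plane with `ℂ` and put `x` at the origin. Two points of `S` are at distance `> 1`
while both lie in the closed unit disk, so by the law of cosines the angle they subtend at `x`
exceeds `π / 3`. Six directions pairwise more than `π / 3` apart would need a full turn of more
than `2π`: sorting their arguments, the five consecutive gaps already span more than `5π / 3`,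
leaving less than `π / 3` for the gap between the last and the first direction.
-/

open Real Complex

/-- `‖u‖² + ‖v‖² - ‖u‖‖v‖ ≤ max ‖u‖ ‖v‖ ^ 2 ≤ 1 < ‖u - v‖²`. -/
theorem two_mul_inner_lt_norm_mul_norm {E : Type*} [NormedAddCommGroup E]
    [InnerProductSpace ℝ E] {u v : E} (hu : ‖u‖ ≤ 1) (hv : ‖v‖ ≤ 1) (huv : 1 < ‖u - v‖) :
    2 * inner ℝ u v < ‖u‖ * ‖v‖ := by
  have hsq := norm_sub_sq_real u v
  have hu0 := norm_nonneg u
  have hv0 := norm_nonneg v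
  rcases le_total ‖u‖ ‖v‖ with h | h <;> nlinarith

theorem Complex.real_inner_eq_norm_mul_norm_mul_cos_arg_sub (z w : ℂ) :
    inner ℝ z w = ‖z‖ * ‖w‖ * Real.cos (arg z - arg w) := by
  rw [Complex.inner, Real.cos_sub, mul_re, conj_re, conj_im, ← norm_mul_cos_arg z,
    ← norm_mul_sin_arg z, ← norm_mul_cos_arg w, ← norm_mul_sin_arg w]
  ring

theorem Real.pi_div_three_lt_abs_of_cos_lt_half {θ : ℝ} (hθ : |θ| < 2 * π)
    (hcos : cos θ < 1 / 2) :
    π / 3 < |θ| ∧ |θ| < 5 * π / 3 := by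
  rw [← cos_abs] at hcos
  have h0 := abs_nonneg θ
  constructor
  · by_contra! h
    have := cos_le_cos_of_nonneg_of_le_pi h0 (by linarith) h
    rw [cos_pi_div_three] at this
    linarith
  · by_contra! h
    have := cos_le_cos_of_nonneg_of_le_pi (by linarith) (by linarith)
      (by linarith : 2 * π - |θ| ≤ π / 3)
    rw [cos_pi_div_three, cos_two_pi_sub] at this
    linarith

section OrderedField

variable {α : Type*} [Field α] [LinearOrder α] [IsStrictOrderedRing α]

theorem Finset.card_sub_one_mul_le_max'_sub_min' {A : Finset α} (hA : A.Nonempty) {c : α}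
    (hc : ∀ a ∈ A, ∀ b ∈ A, a < b → c ≤ b - a) :
    ((A.card : α) - 1) * c ≤ A.max' hA - A.min' hA := by
  induction A using Finset.induction_on_max with
  | empty => exact absurd hA Finset.not_nonempty_empty
  | insert a s hlt ih =>
    rcases s.eq_empty_or_nonempty with rfl | hs
    · simp
    have ha : a ∉ s := fun h => lt_irrefl a (hlt a h)
    have hmax : (insert a s).max' hA = a := by
      rw [Finset.max'_insert _ _ hs, max_eq_left (hlt _ (s.max'_mem hs)).le]
    have hmin : (insert a s).min' hA = s.min' hs := by
      rw [Finset.min'_insert _ _ hs, min_eq_right (hlt _ (s.min'_mem hs)).le]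
    have hlast : c ≤ a - s.max' hs :=
      hc _ (Finset.mem_insert_of_mem (s.max'_mem hs)) _ (Finset.mem_insert_self a s)
        (hlt _ (s.max'_mem hs))
    have hspread := ih hs fun x hx y hy =>
      hc x (Finset.mem_insert_of_mem hx) y (Finset.mem_insert_of_mem hy)
    rw [hmax, hmin, Finset.card_insert_of_notMem ha]
    push_cast
    linarith

theorem Finset.card_le_succ_of_le_abs_sub_lt {A : Finset α} {c : α} (n : ℕ) (hc : 0 < c)
    (h : ∀ a ∈ A, ∀ b ∈ A, a ≠ b → c ≤ |a - b| ∧ |a - b| < (n + 1) * c) :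
    A.card ≤ n + 1 := by
  by_contra! hA
  have hne : A.Nonempty := Finset.card_pos.mp (Nat.zero_lt_of_lt hA)
  have hspread := Finset.card_sub_one_mul_le_max'_sub_min' hne fun a ha b hb hab => by
    simpa only [abs_sub_comm a b, abs_of_pos (sub_pos.mpr hab)] using (h a ha b hb hab.ne).1
  have hcard : (n + 1 : α) ≤ A.card - 1 := by
    have : (n + 2 : α) ≤ A.card := by exact_mod_cast hA
    linarith
  have hwide : (n + 1) * c ≤ A.max' hne - A.min' hne :=
    (mul_le_mul_of_nonneg_right hcard hc.le).trans hspread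
  have hpos : 0 < A.max' hne - A.min' hne := (by positivity : 0 < (n + 1) * c).trans_le hwide
  have hnarrow := (h _ (A.max'_mem hne) _ (A.min'_mem hne) (sub_pos.mp hpos).ne').2
  rw [abs_of_pos hpos] at hnarrow
  exact hwide.not_gt hnarrow

end OrderedField

theorem Complex.pi_div_three_lt_abs_arg_sub {z w : ℂ} (hz : z ≠ 0) (hw : w ≠ 0)
    (hz1 : ‖z‖ ≤ 1) (hw1 : ‖w‖ ≤ 1) (hzw : 1 < ‖z - w‖) :
    π / 3 < |arg z - arg w| ∧ |arg z - arg w| < 5 * π / 3 := by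
  have hinner := two_mul_inner_lt_norm_mul_norm hz1 hw1 hzw
  rw [real_inner_eq_norm_mul_norm_mul_cos_arg_sub] at hinner
  have hpos : 0 < ‖z‖ * ‖w‖ := mul_pos (norm_pos_iff.mpr hz) (norm_pos_iff.mpr hw)
  refine Real.pi_div_three_lt_abs_of_cos_lt_half ?_ (by nlinarith)
  rw [abs_lt]
  constructor <;> linarith [neg_pi_lt_arg z, arg_le_pi z, neg_pi_lt_arg w, arg_le_pi w]

theorem Complex.card_le_five_of_one_lt_norm_sub {T : Finset ℂ}
    (hT : ∀ z ∈ T, z ≠ 0 ∧ ‖z‖ ≤ 1) (hsep : ∀ z ∈ T, ∀ w ∈ T, z ≠ w → 1 < ‖z - w‖) :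
    T.card ≤ 5 := by
  have hgap : ∀ z ∈ T, ∀ w ∈ T, z ≠ w →
      π / 3 < |arg z - arg w| ∧ |arg z - arg w| < 5 * π / 3 := fun z hz w hw hzw =>
    pi_div_three_lt_abs_arg_sub (hT z hz).1 (hT w hw).1 (hT z hz).2 (hT w hw).2
      (hsep z hz w hw hzw)
  have hinj : Set.InjOn arg T := fun z hz w hw h => by
    by_contra hzw
    have := (hgap z hz w hw hzw).1
    rw [h, sub_self, abs_zero] at this
    linarith [pi_pos]
  rw [← Finset.card_image_of_injOn hinj]
  refine Finset.card_le_succ_of_le_abs_sub_lt (c := π / 3) 4 (by positivity) ?_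
  simp only [Finset.mem_image, forall_exists_index, and_imp]
  rintro _ z hz rfl _ w hw rfl hzw
  obtain ⟨hlow, hhigh⟩ := hgap z hz w hw fun h => hzw (h ▸ rfl)
  exact ⟨hlow.le, by linarith⟩

/-- If `x` is a point in the Euclidean plane and `S` is a finite set of points,
each at distance in `(0, 1]` from `x`, and pairwise at distance strictly greater than `1`,
then `|S| ≤ 5`. -/
theorem unit_disk_packing_five (x : EuclideanSpace ℝ (Fin 2))
    (S : Finset (EuclideanSpace ℝ (Fin 2)))
    (hSx : ∀ s ∈ S, 0 < dist s x ∧ dist s x ≤ 1)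
    (hpair : ∀ s ∈ S, ∀ t ∈ S, s ≠ t → 1 < dist s t) :
    S.card ≤ 5 := by
  set e := Complex.orthonormalBasisOneI.repr.symm
  have hnorm : ∀ s, ‖e (s - x)‖ = dist s x := fun s => by
    rw [LinearIsometryEquiv.norm_map, dist_eq_norm]
  have hnorm_sub : ∀ s t, ‖e (s - x) - e (t - x)‖ = dist s t := fun s t => by
    rw [← map_sub, sub_sub_sub_cancel_right, LinearIsometryEquiv.norm_map, dist_eq_norm]
  have hinj : Function.Injective fun s => e (s - x) := e.injective.comp sub_left_injective
  rw [← Finset.card_image_of_injective S hinj]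
  refine Complex.card_le_five_of_one_lt_norm_sub ?_ ?_
  · simp only [Finset.mem_image, forall_exists_index, and_imp]
    rintro _ s hs rfl
    exact ⟨norm_pos_iff.mp (hnorm s ▸ (hSx s hs).1), hnorm s ▸ (hSx s hs).2⟩
  · simp only [Finset.mem_image, forall_exists_index, and_imp]
    rintro _ s hs rfl _ t ht rfl hst
    exact hnorm_sub s t ▸ hpair s hs t ht fun h => hst (h ▸ rfl)
end

section
/- Let x and y be points in the Euclidean plane ℝ² with 0 < dist(x, y) ≤ 1, and let S be a finite set of points in ℝ² such that every s ∈ S satisfies 0 < dist(s, x) ≤ 1 and dist(s, y) > 1, and any two distinct points of S are at Euclidean distance strictly greater than 1 from each other. Then S contains at most 4 points. -/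
/-!
Put `x` at the origin. If `‖u‖, ‖v‖ ≤ 1 < ‖u - v‖`, the law of cosines forces the angle between
`u` and `v` to exceed `π / 3`. Hence the directions of the points of `S`, measured from the
direction of `y`, lie in the open arc `(π / 3, 5π / 3)` of length `4 · π / 3` and are pairwise
more than `π / 3` apart, so at most four of them fit.
-/

open Real InnerProductGeometry Module EuclideanSpace

theorem Finset.card_le_of_mem_Ico_of_le_abs_sub {ι : Type*} {s : Finset ι} {f : ι → ℝ}
    {a δ : ℝ} {n : ℕ} (hδ : 0 < δ) (hf : ∀ i ∈ s, f i ∈ Set.Ico a (a + n * δ))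
    (hsep : ∀ i ∈ s, ∀ j ∈ s, i ≠ j → δ ≤ |f i - f j|) : s.card ≤ n := by
  have hmaps : ∀ i ∈ s, ⌊(f i - a) / δ⌋ ∈ Finset.Ico (0 : ℤ) n := fun i hi => by
    obtain ⟨hlo, hhi⟩ := hf i hi
    rw [Finset.mem_Ico, Int.floor_nonneg, Int.floor_lt, Int.cast_natCast, le_div_iff₀ hδ,
      div_lt_iff₀ hδ]
    constructor <;> linarith
  have hinj : Set.InjOn (fun i => ⌊(f i - a) / δ⌋) s := fun i hi j hj hij => by
    by_contra hne
    have h := Int.abs_sub_lt_one_of_floor_eq_floor hij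
    rw [← sub_div, sub_sub_sub_cancel_right, abs_div, abs_of_pos hδ, div_lt_one hδ] at h
    exact (hsep i hi j hj hne).not_gt h
  simpa using Finset.card_le_card_of_injOn _ hmaps hinj

namespace Real.Angle

theorem abs_toReal_coe_le (x : ℝ) : |(x : Angle).toReal| ≤ |x| := by
  by_cases hx : x ∈ Set.Ioc (-π) π
  · rw [toReal_coe_eq_self_iff_mem_Ioc.2 hx]
  · rw [Set.mem_Ioc, not_and_or, not_lt, not_le] at hx
    refine (abs_toReal_le_pi _).trans (le_abs.2 ?_)
    rcases hx with hx | hx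
    · exact Or.inr (by linarith)
    · exact Or.inl hx.le

theorem card_le_of_lt_abs_toReal {ι : Type*} {s : Finset ι} {θ : ι → Angle} {δ : ℝ} {n : ℕ}
    (hδ : 0 < δ) (hn : 2 * π ≤ (n + 2) * δ) (hθ : ∀ i ∈ s, δ < |(θ i).toReal|)
    (hsep : ∀ i ∈ s, ∀ j ∈ s, i ≠ j → δ < |(θ i - θ j).toReal|) : s.card ≤ n := by
  set φ : ι → ℝ := fun i => toIcoMod two_pi_pos 0 (θ i).toReal
  have hφθ : ∀ i, (φ i : Angle) = θ i := fun i => by simp [φ, coe_toIcoMod]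
  have hφ : ∀ i, φ i ∈ Set.Ico 0 (2 * π) := fun i => by
    simpa using toIcoMod_mem_Ico two_pi_pos 0 (θ i).toReal
  refine Finset.card_le_of_mem_Ico_of_le_abs_sub (f := φ) (a := δ) hδ (fun i hi => ?_)
    (fun i hi j hj hij => ?_)
  · -- `φ i` and `φ i - 2π` both represent `θ i`, so both exceed `δ` in absolute value.
    have hlow : δ < |φ i| :=
      (hθ i hi).trans_le (by simpa [hφθ] using abs_toReal_coe_le (φ i))
    have hhigh : δ < |φ i - 2 * π| :=
      (hθ i hi).trans_le (by simpa [hφθ] using abs_toReal_coe_le (φ i - 2 * π))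
    rw [abs_of_nonneg (hφ i).1] at hlow
    rw [abs_of_neg (by linarith [(hφ i).2])] at hhigh
    constructor <;> linarith
  · refine ((hsep i hi j hj hij).trans_le ?_).le
    simpa [hφθ] using abs_toReal_coe_le (φ i - φ j)

end Real.Angle

namespace InnerProductGeometry

variable {V : Type*} [NormedAddCommGroup V] [InnerProductSpace ℝ V]

theorem pi_div_three_lt_angle_of_norm_le_one_lt_norm_sub {u v : V} (hu : ‖u‖ ≤ 1)
    (hv : ‖v‖ ≤ 1) (huv : 1 < ‖u - v‖) : π / 3 < angle u v := by
  by_contra! h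
  have hcos : 1 / 2 ≤ cos (angle u v) := by
    rw [← cos_pi_div_three]
    exact cos_le_cos_of_nonneg_of_le_pi (angle_nonneg u v) (by linarith [pi_pos]) h
  have hlaw := norm_sub_sq_eq_norm_sq_add_norm_sq_sub_two_mul_norm_mul_norm_mul_cos_angle u v
  nlinarith [norm_nonneg u, norm_nonneg v, mul_nonneg (norm_nonneg u) (norm_nonneg v)]

theorem card_le_of_lt_angle [Fact (finrank ℝ V = 2)] {ι : Type*} {s : Finset ι} {u : ι → V}
    {d : V} {δ : ℝ} {n : ℕ} (hδ : 0 < δ) (hn : 2 * π ≤ (n + 2) * δ) (hd : d ≠ 0)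
    (hu : ∀ i ∈ s, u i ≠ 0) (hud : ∀ i ∈ s, δ < angle (u i) d)
    (hsep : ∀ i ∈ s, ∀ j ∈ s, i ≠ j → δ < angle (u i) (u j)) : s.card ≤ n := by
  have : FiniteDimensional ℝ V := .of_fact_finrank_eq_two
  let o : Orientation ℝ V (Fin 2) := (finBasisOfFinrankEq ℝ V Fact.out).orientation
  refine Real.Angle.card_le_of_lt_abs_toReal (θ := fun i => o.oangle d (u i)) hδ hn
    (fun i hi => ?_) (fun i hi j hj hij => ?_)
  · rw [← o.angle_eq_abs_oangle_toReal hd (hu i hi), angle_comm]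
    exact hud i hi
  · rw [o.oangle_sub_left hd (hu j hj) (hu i hi),
      ← o.angle_eq_abs_oangle_toReal (hu j hj) (hu i hi), angle_comm]
    exact hsep i hi j hj hij

end InnerProductGeometry

/-- If `x, y` are points in the Euclidean plane with `0 < dist x y ≤ 1`, and `S`
is a finite set of points each at distance in `(0, 1]` from `x` and at distance `> 1` from `y`,
pairwise at distance strictly greater than `1`, then `|S| ≤ 4`. -/
theorem sector_packing_four (x y : EuclideanSpace ℝ (Fin 2))
    (hxy : 0 < dist x y) (hxy' : dist x y ≤ 1)
    (S : Finset (EuclideanSpace ℝ (Fin 2)))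
    (hSx : ∀ s ∈ S, 0 < dist s x ∧ dist s x ≤ 1)
    (hSy : ∀ s ∈ S, 1 < dist s y)
    (hpair : ∀ s ∈ S, ∀ t ∈ S, s ≠ t → 1 < dist s t) :
    S.card ≤ 4 := by
  have hnorm : ∀ p, ‖p - x‖ = dist p x := fun p => (dist_eq_norm p x).symm
  have hdiff : ∀ p q, ‖(p - x) - (q - x)‖ = dist p q := fun p q => by
    rw [sub_sub_sub_cancel_right, dist_eq_norm]
  have hy : ‖y - x‖ ≤ 1 := by rwa [hnorm, dist_comm]
  have hS : ∀ s ∈ S, ‖s - x‖ ≤ 1 := fun s hs => (hnorm s).trans_le (hSx s hs).2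
  refine card_le_of_lt_angle (u := (· - x)) (d := y - x) (δ := π / 3) (n := 4) (by positivity)
    (by linarith) (sub_ne_zero.2 (dist_pos.1 hxy).symm)
    (fun s hs => sub_ne_zero.2 (dist_pos.1 (hSx s hs).1)) (fun s hs => ?_)
    (fun s hs t ht hst => ?_)
  · exact pi_div_three_lt_angle_of_norm_le_one_lt_norm_sub (hS s hs) hy
      ((hSy s hs).trans_eq (hdiff s y).symm)
  · exact pi_div_three_lt_angle_of_norm_le_one_lt_norm_sub (hS s hs) (hS t ht)
      ((hpair s hs t ht hst).trans_eq (hdiff s t).symm)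
end

section
/- Let P be a nonempty finite set of points in the Euclidean plane ℝ² and let G be the unit disk graph on P. If D ⊆ P is a nonempty connected dominating set of G and W ⊆ P is an independent set of G, then |W| ≤ 4·|D| + 1. -/
/-!
Grow `D` one vertex at a time along edges of its induced subgraph. The points of `W` within
distance `1` of the first vertex `c` are pairwise more than `1` apart, so seen from `c` their
directions are pairwise more than `π/3` apart, and there are at most `5` of them. When a vertex `c`
adjacent to an already chosen `c'` is added, the newly covered points of `W` lie in the unit disk
about `c` but outside the one about `c'`; seen from `c`, their directions are within `2π/3` of
`c - c'`, which leaves room for at most `4`. As `D` dominates, every point of `W` is covered in the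
end, so `|W| ≤ 5 + 4 (|D| - 1)`.
-/

/-- The unit disk graph on a finite set `P` of points in the Euclidean plane: two distinct
points of `P` are adjacent iff their Euclidean distance is at most `1`. -/
def unitDiskGraph (P : Finset (EuclideanSpace ℝ (Fin 2))) :
    SimpleGraph {p // p ∈ P} where
  Adj a b := a ≠ b ∧ dist (a : EuclideanSpace ℝ (Fin 2)) (b : EuclideanSpace ℝ (Fin 2)) ≤ 1
  symm := by
    constructor
    rintro a b ⟨hne, hd⟩
    exact ⟨hne.symm, by rwa [dist_comm]⟩
  loopless := by
    constructor
    rintro a ⟨hne, _⟩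
    exact hne rfl

open Finset InnerProductGeometry Module
open scoped Real EuclideanSpace

local notation "ℝ²" => EuclideanSpace ℝ (Fin 2)

theorem Real.Angle.abs_toReal_coe_le_s2 (t : ℝ) : |(t : Real.Angle).toReal| ≤ |t| := by
  by_contra! h
  have := Real.cos_lt_cos_of_nonneg_of_le_pi (abs_nonneg t) (abs_toReal_le_pi _) h
  rw [Real.cos_abs, Real.cos_abs, Real.Angle.cos_toReal, Real.Angle.cos_coe] at this
  exact lt_irrefl _ this

theorem exists_nat_mul_le_sub_of_pairwise_lt_abs_sub {g : ℝ} :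
    ∀ {n : ℕ} {S : Finset ℝ}, n + 1 ≤ #S → (S : Set ℝ).Pairwise (fun x y => g < |x - y|) →
      ∃ x ∈ S, ∃ y ∈ S, n * g ≤ y - x
  | 0, S, hS, _ => by
    obtain ⟨x, hx⟩ := card_pos.mp hS
    exact ⟨x, hx, x, hx, by simp⟩
  | n + 1, S, hS, hsep => by
    have hne : S.Nonempty := card_pos.mp (by omega)
    have hmax := S.max'_mem hne
    obtain ⟨x, hx, y, hy, hxy⟩ := exists_nat_mul_le_sub_of_pairwise_lt_abs_sub (n := n)
      (by rw [card_erase_of_mem hmax]; omega) (hsep.mono (erase_subset _ S))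
    have hyS := mem_of_mem_erase hy
    have hgap : g < |y - S.max' hne| := hsep hyS hmax (ne_of_mem_erase hy)
    rw [abs_sub_comm, abs_of_nonneg (sub_nonneg.mpr (S.le_max' y hyS))] at hgap
    refine ⟨x, mem_of_mem_erase hx, _, hmax, ?_⟩
    push_cast
    linarith

section InnerProductSpace

variable {V : Type*} [NormedAddCommGroup V] [InnerProductSpace ℝ V]

theorem pi_div_three_lt_angle_of_one_lt_norm_sub {u v : V} (hu : ‖u‖ ≤ 1) (hv : ‖v‖ ≤ 1)
    (h : 1 < ‖u - v‖) : π / 3 < angle u v := by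
  by_contra! hle
  have hcos : 1 / 2 ≤ Real.cos (angle u v) := by
    rw [← Real.cos_pi_div_three]
    exact Real.cos_le_cos_of_nonneg_of_le_pi (angle_nonneg u v) (by linarith [Real.pi_pos]) hle
  have hinner := cos_angle_mul_norm_mul_norm u v
  have := norm_sub_sq_real u v
  nlinarith [norm_nonneg u, norm_nonneg v, mul_nonneg (norm_nonneg u) (norm_nonneg v)]

theorem angle_lt_two_pi_div_three_of_one_lt_norm_add {u v : V} (hu : ‖u‖ ≤ 1) (hv : ‖v‖ ≤ 1)
    (h : 1 < ‖u + v‖) : angle u v < 2 * π / 3 := by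
  have := pi_div_three_lt_angle_of_one_lt_norm_sub hu (norm_neg v ▸ hv)
    (by rwa [sub_neg_eq_add])
  rw [angle_neg_right] at this
  linarith

theorem pairwise_pi_div_three_lt_angle_sub {c : V} {T : Finset V}
    (hT : (T : Set V) ⊆ Metric.closedBall c 1)
    (hsep : (T : Set V).Pairwise fun p q => 1 < dist p q) :
    (T.map (Equiv.subRight c).toEmbedding : Set V).Pairwise fun z z' => π / 3 < angle z z' := by
  rw [coe_map, (Equiv.subRight c).toEmbedding.injective.injOn.pairwise_image]
  intro p hp q hq hpq
  refine pi_div_three_lt_angle_of_one_lt_norm_sub (mem_closedBall_iff_norm.mp (hT hp))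
    (mem_closedBall_iff_norm.mp (hT hq)) ?_
  show 1 < ‖(p - c) - (q - c)‖
  rw [sub_sub_sub_cancel_right, ← dist_eq_norm]
  exact hsep hp hq hpq


variable [Fact (finrank ℝ V = 2)]

theorem card_le_four_of_pairwise_pi_div_three_lt_angle {w : V} (hw : w ≠ 0) {S : Finset V}
    (hS0 : ∀ z ∈ S, z ≠ 0) (hSw : ∀ z ∈ S, angle w z < 2 * π / 3)
    (hS : (S : Set V).Pairwise fun z z' => π / 3 < angle z z') : #S ≤ 4 := by
  have := FiniteDimensional.of_fact_finrank_eq_two (K := ℝ) (V := V)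
  let o : Orientation ℝ V (Fin 2) := (finBasisOfFinrankEq ℝ V Fact.out).orientation
  -- oriented angles from `w` give real coordinates to the directions in `S`
  let θ : V → ℝ := fun z => (o.oangle w z).toReal
  have hθ : ∀ z ∈ S, |θ z| < 2 * π / 3 := fun z hz => by
    rw [← o.angle_eq_abs_oangle_toReal hw (hS0 z hz)]
    exact hSw z hz
  have hθsep : (S : Set V).Pairwise fun z z' => π / 3 < |θ z - θ z'| := by
    intro z hz z' hz' hzz'
    calc π / 3 < angle z z' := hS hz hz' hzz'
      _ = |((θ z' - θ z : ℝ) : Real.Angle).toReal| := by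
        rw [o.angle_eq_abs_oangle_toReal (hS0 z hz) (hS0 z' hz'), Real.Angle.coe_sub,
          Real.Angle.coe_toReal, Real.Angle.coe_toReal,
          o.oangle_sub_left hw (hS0 z hz) (hS0 z' hz')]
      _ ≤ |θ z' - θ z| := Real.Angle.abs_toReal_coe_le_s2 _
      _ = |θ z - θ z'| := abs_sub_comm _ _
  have hinj : Set.InjOn θ S := fun z hz z' hz' h => by
    by_contra hne
    have : π / 3 < |θ z - θ z'| := hθsep hz hz' hne
    rw [h, sub_self, abs_zero] at this
    linarith [Real.pi_pos]
  by_contra! h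
  obtain ⟨x, hx, y, hy, hxy⟩ := exists_nat_mul_le_sub_of_pairwise_lt_abs_sub (n := 4)
    (S := S.image θ) (by rw [card_image_of_injOn hinj]; omega)
    (by rwa [coe_image, hinj.pairwise_image])
  obtain ⟨z, hz, rfl⟩ := mem_image.mp hx
  obtain ⟨z', hz', rfl⟩ := mem_image.mp hy
  have hz₁ := abs_lt.mp (hθ z hz)
  have hz₂ := abs_lt.mp (hθ z' hz')
  push_cast at hxy
  linarith

theorem card_le_five_of_pairwise_pi_div_three_lt_angle {S : Finset V} (hS0 : ∀ z ∈ S, z ≠ 0)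
    (hS : (S : Set V).Pairwise fun z z' => π / 3 < angle z z') : #S ≤ 5 := by
  classical
  obtain rfl | ⟨z₀, hz₀⟩ := S.eq_empty_or_nonempty
  · simp
  -- the other directions are within `2π/3` of `-z₀`
  have := card_le_four_of_pairwise_pi_div_three_lt_angle (neg_ne_zero.mpr (hS0 z₀ hz₀))
    (S := S.erase z₀) (fun z hz => hS0 z (mem_of_mem_erase hz))
    (fun z hz => by
      have := hS hz₀ (mem_of_mem_erase hz) (ne_of_mem_erase hz).symm
      rw [angle_neg_left]
      linarith)
    (hS.mono (erase_subset z₀ S))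
  rw [card_erase_of_mem hz₀] at this
  omega

theorem card_le_five_of_subset_closedBall {c : V} {T : Finset V}
    (hT : (T : Set V) ⊆ Metric.closedBall c 1)
    (hsep : (T : Set V).Pairwise fun p q => 1 < dist p q) : #T ≤ 5 := by
  by_cases hc : c ∈ T
  · have hTc : ∀ p ∈ T, p = c := fun p hp => by
      by_contra hpc
      exact (hsep hp hc hpc).not_ge (hT hp)
    have : #T ≤ 1 := card_le_one.mpr fun p hp q hq => (hTc p hp).trans (hTc q hq).symm
    omega
  · rw [← card_map (Equiv.subRight c).toEmbedding]
    refine card_le_five_of_pairwise_pi_div_three_lt_angle ?_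
      (pairwise_pi_div_three_lt_angle_sub hT hsep)
    simp only [forall_mem_map, Equiv.coe_toEmbedding, Equiv.subRight_apply, sub_ne_zero]
    exact fun p hp hpc => hc (hpc ▸ hp)

theorem card_le_four_of_subset_closedBall_diff {c c' : V} (hcc : dist c c' ≤ 1) {T : Finset V}
    (hT : (T : Set V) ⊆ Metric.closedBall c 1 \ Metric.closedBall c' 1)
    (hsep : (T : Set V).Pairwise fun p q => 1 < dist p q) : #T ≤ 4 := by
  have hne : ∀ p ∈ T, p ≠ c := fun p hp hpc => (hT hp).2 (hpc ▸ hcc)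
  obtain rfl | ⟨p₀, hp₀⟩ := T.eq_empty_or_nonempty
  · simp
  have hcc' : c - c' ≠ 0 := sub_ne_zero.mpr fun h => (hT hp₀).2 (h ▸ (hT hp₀).1)
  rw [← card_map (Equiv.subRight c).toEmbedding]
  refine card_le_four_of_pairwise_pi_div_three_lt_angle hcc' ?_ ?_
    (pairwise_pi_div_three_lt_angle_sub (hT.trans Set.sdiff_subset) hsep)
  · simp only [forall_mem_map, Equiv.coe_toEmbedding, Equiv.subRight_apply, sub_ne_zero]
    exact hne
  · simp only [forall_mem_map, Equiv.coe_toEmbedding, Equiv.subRight_apply]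
    intro p hp
    rw [angle_comm]
    refine angle_lt_two_pi_div_three_of_one_lt_norm_add (mem_closedBall_iff_norm.mp (hT hp).1)
      (by rwa [← dist_eq_norm]) ?_
    rw [sub_add_sub_cancel, ← dist_eq_norm]
    exact lt_of_not_ge (hT hp).2

end InnerProductSpace

namespace SimpleGraph

variable {α : Type*} {G : SimpleGraph α}

theorem Preconnected.exists_adj_of_induce {s t : Set α} (hs : (G.induce s).Preconnected)
    (hts : t ⊆ s) {u v : α} (hu : u ∈ t) (hv : v ∈ s \ t) : ∃ x ∈ t, ∃ y ∈ s \ t, G.Adj x y := by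
  obtain ⟨p⟩ := hs ⟨u, hts hu⟩ ⟨v, hv.1⟩
  obtain ⟨d, -, hd₁, hd₂⟩ := p.exists_boundary_dart (Subtype.val ⁻¹' t) hu hv.2
  exact ⟨d.fst, hd₁, d.snd, ⟨d.snd.2, hd₂⟩, d.adj⟩

theorem card_biUnion_add_le_of_connected_induce {β : Type*} [DecidableEq α] [DecidableEq β]
    {D : Finset α} (hD : (G.induce (D : Set α)).Connected) (N : α → Finset β) {a b : ℕ}
    (ha : ∀ d ∈ D, #(N d) ≤ a) (hb : ∀ x ∈ D, ∀ y ∈ D, G.Adj x y → #(N y \ N x) ≤ b) :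
    #(D.biUnion N) + b ≤ a + b * #D := by
  have grow : ∀ k < #D, ∃ S ⊆ D, #S = k + 1 ∧ #(S.biUnion N) + b ≤ a + b * (k + 1) := by
    intro k
    induction k with
    | zero =>
      intro _
      obtain ⟨⟨d, hd⟩⟩ := hD.nonempty
      refine ⟨{d}, singleton_subset_iff.mpr hd, card_singleton d, ?_⟩
      rw [singleton_biUnion]
      linarith [ha d hd]
    | succ k ih =>
      intro hk
      obtain ⟨S, hSD, hScard, hSN⟩ := ih (by omega)
      obtain ⟨v, hvD, hvS⟩ :=
        exists_of_ssubset (ssubset_of_subset_of_ne hSD (by rintro rfl; omega))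
      obtain ⟨u, hu⟩ := card_pos.mp (by omega : 0 < #S)
      obtain ⟨x, hxS, y, ⟨hyD, hyS⟩, hxy⟩ := hD.preconnected.exists_adj_of_induce
        (t := (S : Set α)) hSD hu ⟨hvD, hvS⟩
      refine ⟨insert y S, insert_subset hyD hSD, by rw [card_insert_of_notMem hyS, hScard], ?_⟩
      have hnew : #(N y \ S.biUnion N) ≤ #(N y \ N x) :=
        card_le_card (sdiff_subset_sdiff subset_rfl (subset_biUnion_of_mem N hxS))
      have hxy' := hb x (hSD hxS) y hyD hxy
      rw [biUnion_insert, ← card_sdiff_add_card]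
      linarith
  obtain ⟨⟨d, hd⟩⟩ := hD.nonempty
  have hDpos : 0 < #D := card_pos.mpr ⟨d, hd⟩
  obtain ⟨S, hSD, hScard, hSN⟩ := grow (#D - 1) (by omega)
  rwa [eq_of_subset_of_card_le hSD (by omega), Nat.sub_add_cancel hDpos] at hSN

end SimpleGraph

theorem indep_le_four_cds_add_one_general (P : Finset (EuclideanSpace ℝ (Fin 2)))
    (D W : Finset {p // p ∈ P})
    (hdom : ∀ v : {p // p ∈ P}, v ∉ D → ∃ d ∈ D, (unitDiskGraph P).Adj v d)
    (hconn : ((unitDiskGraph P).induce (↑D : Set {p // p ∈ P})).Connected)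
    (hW : ∀ a ∈ W, ∀ b ∈ W, ¬ (unitDiskGraph P).Adj a b) :
    W.card ≤ 4 * D.card + 1 := by
  classical
  let W' : Finset ℝ² := W.map (Function.Embedding.subtype _)
  have hsep : (W' : Set ℝ²).Pairwise fun p q => 1 < dist p q := by
    rw [coe_map, (Function.Embedding.subtype _).injective.injOn.pairwise_image]
    exact fun a ha b hb hab => lt_of_not_ge fun h => hW a ha b hb ⟨hab, h⟩
  let N : {p // p ∈ P} → Finset ℝ² := fun d => W'.filter (· ∈ Metric.closedBall (d : ℝ²) 1)
  have hcover : W' ⊆ D.biUnion N := by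
    simp only [W', subset_iff, forall_mem_map, Function.Embedding.subtype_apply]
    intro w hw
    obtain ⟨d, hd, hwd⟩ : ∃ d ∈ D, dist (w : ℝ²) d ≤ 1 := by
      by_cases hwD : w ∈ D
      · exact ⟨w, hwD, dist_self (w : ℝ²) ▸ zero_le_one⟩
      · obtain ⟨d, hd, -, hwd⟩ := hdom w hwD
        exact ⟨d, hd, hwd⟩
    exact mem_biUnion.mpr ⟨d, hd, mem_filter.mpr ⟨mem_map_of_mem _ hw, hwd⟩⟩
  have hfirst : ∀ d ∈ D, #(N d) ≤ 5 := fun d _ =>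
    card_le_five_of_subset_closedBall (fun _ hp => (mem_filter.mp hp).2)
      (hsep.mono (filter_subset _ _))
  have hnext : ∀ x ∈ D, ∀ y ∈ D, (unitDiskGraph P).Adj x y → #(N y \ N x) ≤ 4 := by
    intro x _ y _ hxy
    refine card_le_four_of_subset_closedBall_diff (dist_comm (x : ℝ²) y ▸ hxy.2) ?_
      (hsep.mono (sdiff_subset.trans (filter_subset _ _)))
    intro p hp
    simp only [N, coe_sdiff, coe_filter, Set.mem_sdiff, Set.mem_ofPred_eq] at hp
    exact ⟨hp.1.2, fun h => hp.2 ⟨hp.1.1, h⟩⟩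
  have hD := (unitDiskGraph P).card_biUnion_add_le_of_connected_induce hconn N hfirst hnext
  have hW' : #W ≤ #(D.biUnion N) := by
    simpa [W'] using card_le_card hcover
  omega

/-- If `D` is a nonempty connected dominating set of the unit disk graph on a
nonempty finite set `P` of points of the plane, and `W` is an independent set, then
`|W| ≤ 4|D| + 1`. -/
theorem indep_le_four_cds_add_one (P : Finset (EuclideanSpace ℝ (Fin 2))) (hP : P.Nonempty)
    (D W : Finset {p // p ∈ P}) (hDne : D.Nonempty)
    (hdom : ∀ v : {p // p ∈ P}, v ∉ D → ∃ d ∈ D, (unitDiskGraph P).Adj v d)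
    (hconn : ((unitDiskGraph P).induce (↑D : Set {p // p ∈ P})).Connected)
    (hW : ∀ a ∈ W, ∀ b ∈ W, ¬ (unitDiskGraph P).Adj a b) :
    W.card ≤ 4 * D.card + 1 :=
  indep_le_four_cds_add_one_general P D W hdom hconn hW
end

section
/- Let G_r be a pendant-augmented unit disk graph on a nonempty finite set P of points in ℝ² with pendants at a subset P₀ ⊆ P. If OPT is a nonempty connected dominating set of G_r and W is an independent set of G_r, then |W| ≤ 5·|OPT| + 1. (Paper's Lemma 1: any maximal independent set of G_r has size at most 5|OPT| + 1, where OPT is a minimum connected dominating set of G_r.) -/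
/-!
A vertex of `OPT` dominates at most six vertices of the independent set `W`: a point of the plane
has at most five neighbours pairwise more than `1` apart (any two of them subtend an angle greater
than `π / 3` at the centre), plus possibly its own pendant. Add the vertices of `OPT` one at a
time, each adjacent to some `u` added before. The new vertex `v` dominates at most five vertices of
`W` not dominated by `u`: if `u` is a point, at most four points of `W` near `v` are far from `u`
(with `u` they form a separated set of neighbours of `v`), plus one pendant; if `u` is the pendant
of `v`, only the five points remain. Hence `|W| ≤ 6 + 5 (|OPT| - 1)`.
-/

/-- The pendant-augmented unit disk graph on a finite set `P` of points in the Euclidean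
plane with pendants at `P₀ ⊆ P`: the vertex set is the disjoint union of `P` (the `Sum.inl`
vertices) and one dummy vertex `Sum.inr u` for each `u ∈ P₀`; two distinct points of `P` are
adjacent iff their Euclidean distance is at most `1`; the dummy vertex of `u ∈ P₀` is adjacent
exactly to the point `u`; dummy vertices are pairwise nonadjacent. -/
def pendantUnitDiskGraph (P P₀ : Finset (EuclideanSpace ℝ (Fin 2))) :
    SimpleGraph ({p // p ∈ P} ⊕ {p // p ∈ P₀}) where
  Adj a b :=
    match a, b with
    | Sum.inl p, Sum.inl q =>
        p ≠ q ∧ dist (p : EuclideanSpace ℝ (Fin 2)) (q : EuclideanSpace ℝ (Fin 2)) ≤ 1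
    | Sum.inl p, Sum.inr u => (p : EuclideanSpace ℝ (Fin 2)) = (u : EuclideanSpace ℝ (Fin 2))
    | Sum.inr u, Sum.inl p => (p : EuclideanSpace ℝ (Fin 2)) = (u : EuclideanSpace ℝ (Fin 2))
    | Sum.inr _, Sum.inr _ => False
  symm := by
    constructor
    rintro (p | u) (q | w) h
    · exact ⟨h.1.symm, by rw [dist_comm]; exact h.2⟩
    · exact h
    · exact h
    · exact h
  loopless := by
    constructor
    rintro (p | u) h
    · exact h.1 rfl
    · exact h

open Real Finset Metric

local notation "ℝ²" => EuclideanSpace ℝ (Fin 2)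

theorem Finset.exists_card_sub_one_mul_le_sub {α : Type*} [Field α] [LinearOrder α]
    [IsStrictOrderedRing α] {s : Finset α} {δ : α} (hs : s.Nonempty)
    (hsep : ∀ a ∈ s, ∀ b ∈ s, a < b → δ ≤ b - a) :
    ∃ a ∈ s, ∃ b ∈ s, (#s - 1 : α) * δ ≤ b - a := by
  induction s using Finset.induction_on_max with
  | empty => simp at hs
  | insert c s hlt ih =>
    have hc : c ∉ s := fun h => lt_irrefl c (hlt c h)
    rcases s.eq_empty_or_nonempty with rfl | hne
    · exact ⟨c, mem_singleton_self c, c, mem_singleton_self c, by simp⟩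
    obtain ⟨a, ha, b, hb, hab⟩ :=
      ih hne fun x hx y hy => hsep x (mem_insert_of_mem hx) y (mem_insert_of_mem hy)
    have hbc := hsep b (mem_insert_of_mem hb) c (mem_insert_self c s) (hlt b hb)
    refine ⟨a, mem_insert_of_mem ha, c, mem_insert_self c s, ?_⟩
    rw [card_insert_of_notMem hc]
    push_cast
    linarith

theorem Real.one_half_le_cos_of_abs_le {x : ℝ} (hx : |x| ≤ π / 3) : 1 / 2 ≤ cos x := by
  rw [← cos_abs, ← cos_pi_div_three]
  exact cos_le_cos_of_nonneg_of_le_pi (abs_nonneg x) (by linarith [pi_pos]) hx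

theorem Complex.cos_arg_sub_lt_one_half {z w : ℂ} (hz : z ≠ 0) (hw : w ≠ 0) (hz1 : ‖z‖ ≤ 1)
    (hw1 : ‖w‖ ≤ 1) (hzw : 1 < dist z w) : Real.cos (arg z - arg w) < 1 / 2 := by
  have hinner : ‖z‖ * ‖w‖ * Real.cos (arg z - arg w) = z.re * w.re + z.im * w.im := by
    rw [Real.cos_sub, cos_arg hz, cos_arg hw, sin_arg, sin_arg]
    field_simp
  have hlaw : ‖z - w‖ ^ 2 = ‖z‖ ^ 2 + ‖w‖ ^ 2 - 2 * (z.re * w.re + z.im * w.im) := by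
    simp only [Complex.sq_norm, Complex.normSq_apply, Complex.sub_re, Complex.sub_im]
    ring
  rw [dist_eq] at hzw
  by_contra! hcos
  have := norm_nonneg z
  have := norm_nonneg w
  nlinarith [mul_le_mul_of_nonneg_left hcos (mul_nonneg (norm_nonneg z) (norm_nonneg w))]

theorem Complex.arg_sub_mem_Ioo_of_one_lt_dist {z w : ℂ} (hz : z ≠ 0) (hw : w ≠ 0)
    (hz1 : ‖z‖ ≤ 1) (hw1 : ‖w‖ ≤ 1) (hzw : 1 < dist z w) (hlt : arg w < arg z) :
    arg z - arg w ∈ Set.Ioo (π / 3) (5 * π / 3) := by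
  have hcos := cos_arg_sub_lt_one_half hz hw hz1 hw1 hzw
  have hupper : arg z - arg w < 2 * π := by linarith [(arg_mem_Ioc z).2, (arg_mem_Ioc w).1]
  constructor
  · by_contra! h
    linarith [one_half_le_cos_of_abs_le (by rwa [abs_of_pos (sub_pos.mpr hlt)])]
  · by_contra! h
    rw [← Real.cos_sub_two_pi] at hcos
    linarith [one_half_le_cos_of_abs_le (x := arg z - arg w - 2 * π)
      (by rw [abs_of_neg (by linarith)]; linarith)]

theorem Complex.card_le_five_of_pairwise_one_lt_dist {T : Finset ℂ}
    (hT : ∀ z ∈ T, z ≠ 0 ∧ ‖z‖ ≤ 1) (hsep : (T : Set ℂ).Pairwise (1 < dist · ·)) : #T ≤ 5 := by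
  have harg : ∀ z ∈ T, ∀ w ∈ T, z ≠ w → arg w < arg z →
      arg z - arg w ∈ Set.Ioo (π / 3) (5 * π / 3) := fun z hz w hw hzw =>
    arg_sub_mem_Ioo_of_one_lt_dist (hT z hz).1 (hT w hw).1 (hT z hz).2 (hT w hw).2 (hsep hz hw hzw)
  have hinj : Set.InjOn arg T := fun z hz w hw h => by
    by_contra hzw
    have := cos_arg_sub_lt_one_half (hT z hz).1 (hT w hw).1 (hT z hz).2 (hT w hw).2
      (hsep hz hw hzw)
    rw [h, sub_self, Real.cos_zero] at this
    norm_num at this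
  by_contra! hcard
  have hA : #(T.image arg) = #T := card_image_of_injOn hinj
  have hsepA : ∀ a ∈ T.image arg, ∀ b ∈ T.image arg, a < b → π / 3 ≤ b - a := by
    simp only [mem_image]
    rintro _ ⟨w, hw, rfl⟩ _ ⟨z, hz, rfl⟩ hwz
    exact (harg z hz w hw (by rintro rfl; exact lt_irrefl _ hwz) hwz).1.le
  obtain ⟨_, ha, _, hb, hspread⟩ :=
    exists_card_sub_one_mul_le_sub (card_pos.mp (by omega)) hsepA
  obtain ⟨w, hw, rfl⟩ := mem_image.mp ha
  obtain ⟨z, hz, rfl⟩ := mem_image.mp hb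
  have h6 : (6 : ℝ) ≤ #(T.image arg) := by
    rw [hA]
    exact_mod_cast hcard
  have hlt : arg w < arg z := by nlinarith [pi_pos]
  have := (harg z hz w hw (by rintro rfl; exact lt_irrefl _ hlt) hlt).2
  nlinarith [pi_pos]

theorem card_le_five_of_pairwise_one_lt_dist {c : ℝ²} {S : Finset ℝ²}
    (hS : ↑S ⊆ closedBall c 1 \ {c}) (hsep : (S : Set ℝ²).Pairwise (1 < dist · ·)) :
    #S ≤ 5 := by
  let f : ℝ² → ℂ := fun x => Complex.orthonormalBasisOneI.repr.symm (x - c)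
  have hdist : ∀ x y, dist (f x) (f y) = dist x y := fun x y => by
    rw [LinearIsometryEquiv.dist_map, dist_sub_right]
  have hf : Function.Injective f := fun x y h => dist_eq_zero.mp (by rw [← hdist, h, dist_self])
  rw [← card_image_of_injective S hf]
  refine Complex.card_le_five_of_pairwise_one_lt_dist (fun z hz => ?_) ?_
  · obtain ⟨x, hx, rfl⟩ := mem_image.mp hz
    obtain ⟨hxc, hxne⟩ := hS hx
    refine ⟨fun h => hxne (sub_eq_zero.mp (LinearIsometryEquiv.map_eq_zero_iff _ |>.mp h)), ?_⟩
    rwa [LinearIsometryEquiv.norm_map, ← dist_eq_norm]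
  · rw [coe_image, hf.injOn.pairwise_image]
    intro x hx y hy hxy
    simpa only [Function.onFun, hdist] using hsep hx hy hxy

theorem card_le_four_of_pairwise_one_lt_dist {c q : ℝ²} {S : Finset ℝ²}
    (hq : q ∈ closedBall c 1 \ {c}) (hS : ↑S ⊆ closedBall c 1 \ {c})
    (hsep : (S : Set ℝ²).Pairwise (1 < dist · ·)) (hfar : ∀ x ∈ S, 1 < dist x q) : #S ≤ 4 := by
  have hqS : q ∉ S := fun h => by linarith [hfar q h, dist_self q]
  have := card_le_five_of_pairwise_one_lt_dist (S := insert q S)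
    (by rw [coe_insert]; exact Set.insert_subset hq hS)
    (by rw [coe_insert]; exact hsep.insert fun x hx _ => ⟨(dist_comm x q) ▸ hfar x hx, hfar x hx⟩)
  rw [card_insert_of_notMem hqS] at this
  omega

namespace SimpleGraph

variable {V : Type*} (G : SimpleGraph V)

def closedNeighborSet (v : V) : Set V := insert v (G.neighborSet v)

variable {G}

theorem mem_closedNeighborSet {v w : V} : w ∈ G.closedNeighborSet v ↔ w = v ∨ G.Adj v w :=
  Iff.rfl

theorem Connected.exists_adj_mem_diff_of_induce {s t : Set V} (hconn : (G.induce s).Connected)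
    (hts : t ⊆ s) {x y : V} (hx : x ∈ t) (hy : y ∈ s \ t) : ∃ u ∈ t, ∃ v ∈ s \ t, G.Adj u v := by
  obtain ⟨p⟩ := hconn ⟨x, hts hx⟩ ⟨y, hy.1⟩
  obtain ⟨d, -, hd₁, hd₂⟩ := p.exists_boundary_dart (Subtype.val ⁻¹' t) hx hy.2
  exact ⟨d.fst, hd₁, d.snd, ⟨d.snd.2, hd₂⟩, d.adj⟩

open Classical in
theorem card_filter_exists_mem_closedNeighborSet_insert_le {W t : Finset V} {u : V} (hu : u ∈ t)
    (v : V) :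
    #{w ∈ W | ∃ d ∈ insert v t, w ∈ G.closedNeighborSet d} ≤
      #{w ∈ W | ∃ d ∈ t, w ∈ G.closedNeighborSet d} +
        #{w ∈ W | w ∈ G.closedNeighborSet v ∧ w ∉ G.closedNeighborSet u} := by
  refine (card_le_card fun w hw => ?_).trans (card_union_le _ _)
  simp only [mem_union, mem_filter, exists_mem_insert] at hw ⊢
  by_cases hwt : ∃ d ∈ t, w ∈ G.closedNeighborSet d
  · exact Or.inl ⟨hw.1, hwt⟩
  · exact Or.inr ⟨hw.1, hw.2.resolve_right hwt, fun hwu => hwt ⟨u, hu, hwu⟩⟩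

open Classical in
theorem card_filter_exists_mem_closedNeighborSet_le {W D : Finset V} {a b : ℕ}
    (hconn : (G.induce (D : Set V)).Connected)
    (hvertex : ∀ v, #{w ∈ W | w ∈ G.closedNeighborSet v} ≤ a + b)
    (hedge : ∀ u v, G.Adj u v →
      #{w ∈ W | w ∈ G.closedNeighborSet v ∧ w ∉ G.closedNeighborSet u} ≤ a) :
    #{w ∈ W | ∃ d ∈ D, w ∈ G.closedNeighborSet d} ≤ a * #D + b := by
  have grow : ∀ n < #D, ∃ t ⊆ D, #t = n + 1 ∧
      #{w ∈ W | ∃ d ∈ t, w ∈ G.closedNeighborSet d} ≤ a * (n + 1) + b := by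
    intro n
    induction n with
    | zero =>
      intro _
      obtain ⟨⟨d, hd⟩⟩ := hconn.nonempty
      refine ⟨{d}, singleton_subset_iff.mpr hd, card_singleton d, ?_⟩
      simpa using hvertex d
    | succ n ih =>
      intro hn
      obtain ⟨t, htD, htcard, hbound⟩ := ih (by omega)
      obtain ⟨y, hyD, hyt⟩ := exists_of_ssubset (ssubset_of_subset_of_ne htD (by rintro rfl; omega))
      obtain ⟨x, hx⟩ := card_pos.mp (by omega : 0 < #t)
      obtain ⟨u, hu, v, ⟨hvD, hvt⟩, huv⟩ :=
        hconn.exists_adj_mem_diff_of_induce (coe_subset.mpr htD) hx ⟨hyD, hyt⟩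
      refine ⟨insert v t, insert_subset hvD htD, by rw [card_insert_of_notMem hvt, htcard], ?_⟩
      calc #{w ∈ W | ∃ d ∈ insert v t, w ∈ G.closedNeighborSet d}
          ≤ #{w ∈ W | ∃ d ∈ t, w ∈ G.closedNeighborSet d} +
              #{w ∈ W | w ∈ G.closedNeighborSet v ∧ w ∉ G.closedNeighborSet u} :=
            card_filter_exists_mem_closedNeighborSet_insert_le hu v
        _ ≤ a * (n + 1) + b + a := add_le_add hbound (hedge u v huv)
        _ = a * (n + 1 + 1) + b := by ring
  obtain ⟨⟨d, hd⟩⟩ := hconn.nonempty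
  have hDpos : 0 < #D := card_pos.mpr ⟨d, hd⟩
  obtain ⟨t, htD, htcard, hbound⟩ := grow (#D - 1) (by omega)
  rwa [eq_of_subset_of_card_le htD (by omega), Nat.sub_add_cancel hDpos] at hbound

end SimpleGraph

namespace pendantUnitDiskGraph

variable {P P₀ : Finset ℝ²}

@[simp]
theorem adj_inl_inl {p q : {p // p ∈ P}} :
    (pendantUnitDiskGraph P P₀).Adj (.inl p) (.inl q) ↔ p ≠ q ∧ dist (p : ℝ²) q ≤ 1 :=
  Iff.rfl

@[simp]
theorem adj_inl_inr {p : {p // p ∈ P}} {u : {p // p ∈ P₀}} :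
    (pendantUnitDiskGraph P P₀).Adj (.inl p) (.inr u) ↔ (p : ℝ²) = u :=
  Iff.rfl

@[simp]
theorem adj_inr_inl {p : {p // p ∈ P}} {u : {p // p ∈ P₀}} :
    (pendantUnitDiskGraph P P₀).Adj (.inr u) (.inl p) ↔ (p : ℝ²) = u :=
  Iff.rfl

@[simp]
theorem not_adj_inr_inr {u u' : {p // p ∈ P₀}} :
    ¬(pendantUnitDiskGraph P P₀).Adj (.inr u) (.inr u') :=
  id

variable {W : Finset ({p // p ∈ P} ⊕ {p // p ∈ P₀})}

theorem one_lt_dist_of_isIndepSet (hW : (pendantUnitDiskGraph P P₀).IsIndepSet ↑W)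
    {p q : {p // p ∈ P}} (hp : .inl p ∈ W) (hq : .inl q ∈ W) (hpq : p ≠ q) :
    1 < dist (p : ℝ²) q := by
  by_contra! h
  exact hW hp hq (by simpa using hpq) ⟨hpq, h⟩

theorem card_toLeft_le_of_packing {S : Set ℝ²} {n : ℕ}
    (hpack : ∀ T : Finset ℝ², ↑T ⊆ S → (T : Set ℝ²).Pairwise (1 < dist · ·) → #T ≤ n)
    (hW : (pendantUnitDiskGraph P P₀).IsIndepSet ↑W) {F : Finset ({p // p ∈ P} ⊕ {p // p ∈ P₀})}
    (hFW : F ⊆ W) (hFS : ∀ p : {p // p ∈ P}, .inl p ∈ F → (p : ℝ²) ∈ S) : #F.toLeft ≤ n := by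
  rw [← card_map (Function.Embedding.subtype _)]
  refine hpack _ (fun x hx => ?_) fun x hx y hy hxy => ?_
  · obtain ⟨p, hp, rfl⟩ := mem_map.mp hx
    exact hFS p (mem_toLeft.mp hp)
  · obtain ⟨p, hp, rfl⟩ := mem_map.mp hx
    obtain ⟨q, hq, rfl⟩ := mem_map.mp hy
    exact one_lt_dist_of_isIndepSet hW (hFW (mem_toLeft.mp hp)) (hFW (mem_toLeft.mp hq))
      (fun h => hxy (congrArg _ h))

local notation "N[" v "]" => SimpleGraph.closedNeighborSet (pendantUnitDiskGraph P P₀) v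

open Classical in
theorem card_toRight_filter_mem_closedNeighborSet_le_one
    (F : Finset ({p // p ∈ P} ⊕ {p // p ∈ P₀})) (v : {p // p ∈ P} ⊕ {p // p ∈ P₀}) :
    #{w ∈ F | w ∈ N[v]}.toRight ≤ 1 := by
  refine card_le_one.mpr fun s hs s' hs' => ?_
  simp only [mem_toRight, mem_filter, SimpleGraph.mem_closedNeighborSet] at hs hs'
  rcases v with p | d
  · simp only [reduceCtorEq, adj_inl_inr, false_or] at hs hs'
    exact Subtype.ext (hs.2.symm.trans hs'.2)
  · simp only [Sum.inr.injEq, not_adj_inr_inr, or_false] at hs hs'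
    exact hs.2.trans hs'.2.symm

open Classical in
theorem card_filter_mem_closedNeighborSet_inr_le_two
    (F : Finset ({p // p ∈ P} ⊕ {p // p ∈ P₀})) (d : {p // p ∈ P₀}) :
    #{w ∈ F | w ∈ N[.inr d]} ≤ 2 := by
  have hleft : #{w ∈ F | w ∈ N[.inr d]}.toLeft ≤ 1 := by
    refine card_le_one.mpr fun r hr r' hr' => ?_
    simp only [mem_toLeft, mem_filter, SimpleGraph.mem_closedNeighborSet, reduceCtorEq,
      adj_inr_inl, false_or] at hr hr'
    exact Subtype.ext (hr.2.trans hr'.2.symm)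
  have hright := card_toRight_filter_mem_closedNeighborSet_le_one F (.inr d)
  rw [← card_toLeft_add_card_toRight]
  omega

open Classical in
theorem card_filter_mem_closedNeighborSet_le_six (hW : (pendantUnitDiskGraph P P₀).IsIndepSet ↑W)
    (v : {p // p ∈ P} ⊕ {p // p ∈ P₀}) : #{w ∈ W | w ∈ N[v]} ≤ 6 := by
  rcases v with p | d
  · by_cases hp : .inl p ∈ W
    · calc #{w ∈ W | w ∈ N[.inl p]} ≤ #{.inl p} := card_le_card fun w hw => by
            rw [mem_filter, SimpleGraph.mem_closedNeighborSet] at hw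
            obtain ⟨hwW, rfl | hadj⟩ := hw
            · exact mem_singleton_self _
            · exact absurd hadj (hW hp hwW hadj.ne)
        _ ≤ 6 := by simp
    · have hleft : #{w ∈ W | w ∈ N[.inl p]}.toLeft ≤ 5 := by
        refine card_toLeft_le_of_packing (S := closedBall (p : ℝ²) 1 \ {(p : ℝ²)})
          (fun T hT hsep => card_le_five_of_pairwise_one_lt_dist hT hsep) hW (filter_subset _ _)
          fun r hr => ?_
        rw [mem_filter, SimpleGraph.mem_closedNeighborSet, adj_inl_inl] at hr
        obtain ⟨hrW, hrp | ⟨hpr, hdist⟩⟩ := hr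
        · exact absurd (hrp ▸ hrW) hp
        · exact ⟨mem_closedBall.mpr (dist_comm (r : ℝ²) p ▸ hdist),
            fun h => hpr (Subtype.ext h).symm⟩
      have hright := card_toRight_filter_mem_closedNeighborSet_le_one W (.inl p)
      rw [← card_toLeft_add_card_toRight]
      omega
  · exact (card_filter_mem_closedNeighborSet_inr_le_two W d).trans (by norm_num)

open Classical in
theorem card_filter_mem_closedNeighborSet_inl_diff_inl_le_five
    (hW : (pendantUnitDiskGraph P P₀).IsIndepSet ↑W) {p q : {p // p ∈ P}}
    (hqp : (pendantUnitDiskGraph P P₀).Adj (.inl q) (.inl p)) :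
    #{w ∈ W | w ∈ N[.inl p] ∧ w ∉ N[.inl q]} ≤ 5 := by
  have hleft : #{w ∈ W | w ∈ N[.inl p] ∧ w ∉ N[.inl q]}.toLeft ≤ 4 := by
    obtain ⟨hqp, hdist⟩ := hqp
    refine card_toLeft_le_of_packing
      (S := (closedBall (p : ℝ²) 1 \ {(p : ℝ²)}) ∩ {x | 1 < dist x q})
      (fun T hT hsep => card_le_four_of_pairwise_one_lt_dist
        ⟨mem_closedBall.mpr (dist_comm (q : ℝ²) p ▸ hdist), fun h => hqp (Subtype.ext h)⟩
        (hT.trans Set.inter_subset_left) hsep fun x hx => (hT hx).2)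
      hW (filter_subset _ _) fun r hr => ?_
    simp only [mem_filter, SimpleGraph.mem_closedNeighborSet, adj_inl_inl, Sum.inl.injEq] at hr
    obtain ⟨-, rfl | ⟨hpr, hrp⟩, hrq⟩ := hr
    · exact absurd (Or.inr ⟨hqp, hdist⟩) hrq
    · push Not at hrq
      exact ⟨⟨mem_closedBall.mpr (dist_comm (r : ℝ²) p ▸ hrp), fun h => hpr (Subtype.ext h).symm⟩,
        (dist_comm (q : ℝ²) r ▸ hrq.2 (Ne.symm hrq.1) : 1 < dist (r : ℝ²) q)⟩
  have hright : #{w ∈ W | w ∈ N[.inl p] ∧ w ∉ N[.inl q]}.toRight ≤ 1 :=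
    (card_le_card (toRight_subset_toRight (monotone_filter_right W fun _ _ h => h.1))).trans
      (card_toRight_filter_mem_closedNeighborSet_le_one W (.inl p))
  rw [← card_toLeft_add_card_toRight]
  omega

open Classical in
theorem card_filter_mem_closedNeighborSet_inl_diff_inr_le_five
    (hW : (pendantUnitDiskGraph P P₀).IsIndepSet ↑W) {p : {p // p ∈ P}} {e : {p // p ∈ P₀}}
    (hep : (pendantUnitDiskGraph P P₀).Adj (.inr e) (.inl p)) :
    #{w ∈ W | w ∈ N[.inl p] ∧ w ∉ N[.inr e]} ≤ 5 := by
  have hleft : #{w ∈ W | w ∈ N[.inl p] ∧ w ∉ N[.inr e]}.toLeft ≤ 5 := by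
    refine card_toLeft_le_of_packing (S := closedBall (p : ℝ²) 1 \ {(p : ℝ²)})
      (fun T hT hsep => card_le_five_of_pairwise_one_lt_dist hT hsep) hW (filter_subset _ _)
      fun r hr => ?_
    simp only [mem_filter, SimpleGraph.mem_closedNeighborSet, adj_inl_inl, reduceCtorEq,
      false_or] at hr
    obtain ⟨-, hrp | ⟨hpr, hrp⟩, hre⟩ := hr
    · exact absurd (Sum.inl_injective hrp ▸ hep) hre
    · exact ⟨mem_closedBall.mpr (dist_comm (r : ℝ²) p ▸ hrp), fun h => hpr (Subtype.ext h).symm⟩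
  -- the only pendant next to `p` is `e` itself
  have hright : #{w ∈ W | w ∈ N[.inl p] ∧ w ∉ N[.inr e]}.toRight = 0 := by
    refine card_eq_zero.mpr (eq_empty_of_forall_notMem fun s hs => ?_)
    simp only [mem_toRight, mem_filter, SimpleGraph.mem_closedNeighborSet, adj_inl_inr,
      reduceCtorEq, false_or, Sum.inr.injEq, not_adj_inr_inr, or_false] at hs
    exact hs.2.2 (Subtype.ext (hs.2.1.symm.trans hep))
  rw [← card_toLeft_add_card_toRight]
  omega

open Classical in
theorem card_filter_mem_closedNeighborSet_diff_le_five
    (hW : (pendantUnitDiskGraph P P₀).IsIndepSet ↑W) {u v : {p // p ∈ P} ⊕ {p // p ∈ P₀}}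
    (huv : (pendantUnitDiskGraph P P₀).Adj u v) : #{w ∈ W | w ∈ N[v] ∧ w ∉ N[u]} ≤ 5 := by
  rcases v with p | d
  · rcases u with q | e
    · exact card_filter_mem_closedNeighborSet_inl_diff_inl_le_five hW huv
    · exact card_filter_mem_closedNeighborSet_inl_diff_inr_le_five hW huv
  · calc #{w ∈ W | w ∈ N[.inr d] ∧ w ∉ N[u]} ≤ #{w ∈ W | w ∈ N[.inr d]} :=
          card_le_card (monotone_filter_right W fun _ _ h => h.1)
      _ ≤ 5 := (card_filter_mem_closedNeighborSet_inr_le_two W d).trans (by norm_num)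

end pendantUnitDiskGraph

theorem indep_le_five_cds_add_one_general (P P₀ : Finset (EuclideanSpace ℝ (Fin 2)))
    (OPT W : Finset ({p // p ∈ P} ⊕ {p // p ∈ P₀}))
    (hdom : ∀ v : {p // p ∈ P} ⊕ {p // p ∈ P₀}, v ∉ OPT →
      ∃ d ∈ OPT, (pendantUnitDiskGraph P P₀).Adj v d)
    (hconn : ((pendantUnitDiskGraph P P₀).induce
      (↑OPT : Set ({p // p ∈ P} ⊕ {p // p ∈ P₀}))).Connected)
    (hW : ∀ a ∈ W, ∀ b ∈ W, ¬ (pendantUnitDiskGraph P P₀).Adj a b) :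
    W.card ≤ 5 * OPT.card + 1 := by
  classical
  have hindep : (pendantUnitDiskGraph P P₀).IsIndepSet ↑W := fun a ha b hb _ => hW a ha b hb
  have hdominated :
      W ⊆ {w ∈ W | ∃ d ∈ OPT, w ∈ (pendantUnitDiskGraph P P₀).closedNeighborSet d} :=
    fun w hw => mem_filter.mpr ⟨hw, by
      by_cases hwO : w ∈ OPT
      · exact ⟨w, hwO, Or.inl rfl⟩
      · obtain ⟨d, hd, hadj⟩ := hdom w hwO
        exact ⟨d, hd, Or.inr hadj.symm⟩⟩
  calc #W ≤ _ := card_le_card hdominated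
    _ ≤ 5 * #OPT + 1 := SimpleGraph.card_filter_exists_mem_closedNeighborSet_le hconn
      (pendantUnitDiskGraph.card_filter_mem_closedNeighborSet_le_six hindep)
      fun _ _ => pendantUnitDiskGraph.card_filter_mem_closedNeighborSet_diff_le_five hindep

/-- Paper's Lemma 1: If `OPT` is a nonempty connected dominating set of the
pendant-augmented unit disk graph `G_r` on a nonempty finite `P ⊆ ℝ²` with pendants at
`P₀ ⊆ P`, and `W` is an independent set of `G_r`, then `|W| ≤ 5|OPT| + 1`. -/
theorem indep_le_five_cds_add_one (P P₀ : Finset (EuclideanSpace ℝ (Fin 2)))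
    (hP : P.Nonempty) (hP₀ : P₀ ⊆ P)
    (OPT W : Finset ({p // p ∈ P} ⊕ {p // p ∈ P₀})) (hOPTne : OPT.Nonempty)
    (hdom : ∀ v : {p // p ∈ P} ⊕ {p // p ∈ P₀}, v ∉ OPT →
      ∃ d ∈ OPT, (pendantUnitDiskGraph P P₀).Adj v d)
    (hconn : ((pendantUnitDiskGraph P P₀).induce
      (↑OPT : Set ({p // p ∈ P} ⊕ {p // p ∈ P₀}))).Connected)
    (hW : ∀ a ∈ W, ∀ b ∈ W, ¬ (pendantUnitDiskGraph P P₀).Adj a b) :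
    W.card ≤ 5 * OPT.card + 1 :=
  indep_le_five_cds_add_one_general P P₀ OPT W hdom hconn hW
end

section
/- Let G_r be a pendant-augmented unit disk graph on a nonempty finite set P of points in ℝ² with pendants at a subset P₀ ⊆ P. Let D ⊆ P satisfy: (i) the subgraph of G_r induced by D is connected; (ii) every dummy vertex is adjacent to some vertex of D; and (iii) for every v ∈ D, either the subgraph of G_r induced by D ∖ {v} is disconnected, or some dummy vertex has no neighbor in D ∖ {v}. Then for every nonempty connected dominating set OPT of G_r, |D| ≤ 20·|OPT| + 4. (Paper's Theorem 3: the cardinality of the subset D computed by the Proposed algorithm is at most 20·OPT + 4, where OPT is the size of a minimum connected dominating set of G_r.) -/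
open Finset

namespace SimpleGraph

variable {V : Type*} {G : SimpleGraph V} {s t X J : Finset V} {a b c x y : V}

variable (G) in
/-- Reachability by walks inside `s`; reflexive even at vertices outside `s`. -/
def ReachWithin (s : Finset V) : V → V → Prop :=
  Relation.ReflTransGen fun u v => u ∈ s ∧ v ∈ s ∧ G.Adj u v

variable (G) in
def ConnectedWithin (s : Finset V) : Prop :=
  ∀ a ∈ s, ∀ b ∈ s, G.ReachWithin s a b

namespace ReachWithin

lemma symm (h : G.ReachWithin s a b) : G.ReachWithin s b a := by
  induction h with
  | refl => exact .refl
  | tail _ hstep ih => exact .head ⟨hstep.2.1, hstep.1, hstep.2.2.symm⟩ ih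

lemma trans (h : G.ReachWithin s a b) (h' : G.ReachWithin s b c) : G.ReachWithin s a c :=
  Relation.ReflTransGen.trans h h'

lemma mono (hst : s ⊆ t) (h : G.ReachWithin s a b) : G.ReachWithin t a b :=
  Relation.ReflTransGen.mono (fun _ _ huv => ⟨hst huv.1, hst huv.2.1, huv.2.2⟩) _ _ h

lemma exists_adj (h : G.ReachWithin s a b) (hab : a ≠ b) : ∃ y ∈ s, G.Adj a y := by
  obtain rfl | ⟨y, ⟨-, hy, hay⟩, -⟩ := Relation.ReflTransGen.cases_head h
  · exact absurd rfl hab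
  · exact ⟨y, hy, hay⟩

/-- If every edge from `t` to the rest of `s` leaves `t` at `c`, a walk in `s` from `t` to `c`
can be shortcut inside `t`. -/
lemma of_gate (hc : c ∈ t) (hgate : ∀ x ∈ t, ∀ y ∈ s, y ∉ t → G.Adj x y → x = c) (ha : a ∈ t)
    (h : G.ReachWithin s a c) : G.ReachWithin t a c := by
  classical
  suffices ∀ b, G.ReachWithin s a b → G.ReachWithin t a (if b ∈ t then b else c) by
    simpa [hc] using this c h
  intro b hab
  induction hab with
  | refl => simpa [ha] using .refl
  | @tail b y _ hby ih =>
    obtain ⟨hb, hy, hadj⟩ := hby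
    by_cases hbt : b ∈ t <;> by_cases hyt : y ∈ t <;>
      simp only [hbt, hyt, if_true, if_false] at ih ⊢
    · exact ih.tail ⟨hbt, hyt, hadj⟩
    · exact hgate b hbt y hy hyt hadj ▸ ih
    · exact hgate y hyt b hb hbt hadj.symm ▸ ih
    · exact ih

end ReachWithin

lemma connectedWithin_of_forall_reachWithin (h : ∀ y ∈ s, G.ReachWithin s y c) :
    G.ConnectedWithin s :=
  fun a ha b hb => (h a ha).trans (h b hb).symm

lemma connectedWithin_of_preconnected_induce (h : (G.induce (s : Set V)).Preconnected) :
    G.ConnectedWithin s := by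
  intro a ha b hb
  have := (reachable_iff_reflTransGen _ _).1 (h ⟨a, ha⟩ ⟨b, hb⟩)
  exact Relation.ReflTransGen.lift Subtype.val (fun u v huv => ⟨u.2, v.2, huv⟩) _ _ this

lemma ConnectedWithin.connected_induce (h : G.ConnectedWithin s) (hne : s.Nonempty) :
    (G.induce (s : Set V)).Connected := by
  have key : ∀ a b (ha : a ∈ s) (hb : b ∈ s), G.ReachWithin s a b →
      (G.induce (s : Set V)).Reachable ⟨a, ha⟩ ⟨b, hb⟩ := by
    intro a b ha hb hab
    induction hab with
    | refl => rfl
    | tail _ hstep ih => exact (ih hstep.1).trans (Adj.reachable hstep.2.2)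
  have : Nonempty (s : Set V) := hne.coe_sort
  exact ⟨fun u v => key u v u.2 v.2 (h u u.2 v v.2)⟩

variable (G) in
open Classical in
noncomputable def componentWithin (s : Finset V) (a : V) : Finset V :=
  {x ∈ s | G.ReachWithin s a x}

lemma mem_componentWithin : x ∈ G.componentWithin s a ↔ x ∈ s ∧ G.ReachWithin s a x := by
  classical
  simp [componentWithin]

variable [DecidableEq V]

variable (G) in
open Classical in
noncomputable def nonCutVertices (s : Finset V) : Finset V :=
  {v ∈ s | G.ConnectedWithin (s.erase v)}

lemma mem_nonCutVertices :
    a ∈ G.nonCutVertices s ↔ a ∈ s ∧ G.ConnectedWithin (s.erase a) := by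
  classical
  simp [nonCutVertices]

lemma nonCutVertices_subset : G.nonCutVertices s ⊆ s :=
  fun _ h => (mem_nonCutVertices.1 h).1

lemma erase_nonCutVertices_subset (hts : t ⊆ s) (hy : y ∈ t)
    (hreach : ∀ z ∈ s \ t, ∀ v ∈ t, v ≠ y → G.ReachWithin (s.erase v) z y) :
    (G.nonCutVertices t).erase y ⊆ G.nonCutVertices s := by
  intro v hv
  obtain ⟨hvy, hv⟩ := mem_erase.1 hv
  obtain ⟨hvt, hconn⟩ := mem_nonCutVertices.1 hv
  refine mem_nonCutVertices.2 ⟨hts hvt, connectedWithin_of_forall_reachWithin (c := y) ?_⟩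
  intro z hz
  obtain ⟨hzv, hzs⟩ := mem_erase.1 hz
  by_cases hzt : z ∈ t
  · exact (hconn z (mem_erase.2 ⟨hzv, hzt⟩) y (mem_erase.2 ⟨hvy.symm, hy⟩)).mono
      (erase_subset_erase v hts)
  · exact hreach z (mem_sdiff.2 ⟨hzs, hzt⟩) v hvt hvy

variable (G) in
/-- `X` is a nonempty union of components of `s \ {c}`. -/
structure IsFlap (s : Finset V) (c : V) (X : Finset V) : Prop where
  center_mem : c ∈ s
  subset : X ⊆ s
  center_notMem : c ∉ X
  nonempty : X.Nonempty
  adj_mem : ∀ x ∈ X, ∀ y ∈ s, G.Adj x y → y ∈ insert c X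

lemma isFlap_componentWithin (hc : c ∈ s) (ha : a ∈ s.erase c) :
    G.IsFlap s c (G.componentWithin (s.erase c) a) where
  center_mem := hc
  subset := fun x hx => mem_of_mem_erase (mem_componentWithin.1 hx).1
  center_notMem := fun h => (mem_erase.1 (mem_componentWithin.1 h).1).1 rfl
  nonempty := ⟨a, mem_componentWithin.2 ⟨ha, .refl⟩⟩
  adj_mem := by
    intro x hx y hy hxy
    obtain ⟨hxs, hax⟩ := mem_componentWithin.1 hx
    rcases eq_or_ne y c with rfl | hyc
    · exact mem_insert_self _ _
    · exact mem_insert_of_mem <| mem_componentWithin.2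
        ⟨mem_erase.2 ⟨hyc, hy⟩, hax.tail ⟨hxs, mem_erase.2 ⟨hyc, hy⟩, hxy⟩⟩

namespace IsFlap

section

variable (hs : G.ConnectedWithin s) (hX : G.IsFlap s c X)
include hs hX

lemma connectedWithin_sdiff : G.ConnectedWithin (s \ X) := by
  have hc : c ∈ s \ X := mem_sdiff.2 ⟨hX.center_mem, hX.center_notMem⟩
  refine connectedWithin_of_forall_reachWithin (c := c) fun y hy => ?_
  refine (hs y (mem_sdiff.1 hy).1 c hX.center_mem).of_gate hc ?_ hy
  intro u hu v hvs hv huv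
  have hvX : v ∈ X := by simpa [hvs] using hv
  obtain ⟨hus, huX⟩ := mem_sdiff.1 hu
  simpa [huX] using hX.adj_mem v hvX u hus huv.symm

lemma reachWithin_insert (hx : x ∈ X) : G.ReachWithin (insert c X) x c := by
  refine (hs x (hX.subset hx) c hX.center_mem).of_gate (mem_insert_self _ _) ?_
    (mem_insert_of_mem hx)
  intro u hu v hvs hv huv
  rcases mem_insert.1 hu with rfl | huX
  · rfl
  · exact absurd (hX.adj_mem u huX v hvs huv) hv

lemma erase_nonCutVertices_sdiff_subset :
    (G.nonCutVertices (s \ X)).erase c ⊆ G.nonCutVertices s \ X := by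
  intro v hv
  refine mem_sdiff.2 ⟨erase_nonCutVertices_subset sdiff_subset
    (mem_sdiff.2 ⟨hX.center_mem, hX.center_notMem⟩) ?_ hv, ?_⟩
  · intro z hz u hu huc
    refine (hX.reachWithin_insert hs (by simpa [hX.subset] using hz)).mono ?_
    intro w hw
    rcases mem_insert.1 hw with rfl | hwX
    · exact mem_erase.2 ⟨huc.symm, hX.center_mem⟩
    · exact mem_erase.2 ⟨fun h => (mem_sdiff.1 hu).2 (h ▸ hwX), hX.subset hwX⟩
  · exact (mem_sdiff.1 (nonCutVertices_subset (mem_of_mem_erase hv))).2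

/-- If some `x ∈ X` is a cut vertex of `s`, a component of `s \ {x}` not reaching `c` is a
smaller flap at `x` inside `X`. -/
lemma exists_subset_nonCutVertices :
    ∃ c' X', G.IsFlap s c' X' ∧ X' ⊆ G.nonCutVertices s := by
  induction X using Finset.strongInduction generalizing c with
  | H X ih =>
  by_cases hXn : X ⊆ G.nonCutVertices s
  · exact ⟨c, X, hX, hXn⟩
  obtain ⟨x, hx, hxn⟩ := not_subset.1 hXn
  have hxs := hX.subset hx
  obtain ⟨w, hw, hwc⟩ : ∃ w ∈ s.erase x, ¬ G.ReachWithin (s.erase x) w c := by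
    by_contra! h
    exact hxn (mem_nonCutVertices.2 ⟨hxs, connectedWithin_of_forall_reachWithin h⟩)
  refine ih _ (Finset.ssubset_of_subset_of_ssubset ?_ (erase_ssubset hx))
    (isFlap_componentWithin hxs hw)
  intro z hz
  obtain ⟨hzs, hwz⟩ := mem_componentWithin.1 hz
  refine mem_erase.2 ⟨(mem_erase.1 hzs).1, not_not.1 fun hzX => hwc (hwz.trans ?_)⟩
  refine (hX.connectedWithin_sdiff hs z (mem_sdiff.2 ⟨mem_of_mem_erase hzs, hzX⟩) c
    (mem_sdiff.2 ⟨hX.center_mem, hX.center_notMem⟩)).mono ?_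
  exact fun u hu => mem_erase.2 ⟨fun h => (mem_sdiff.1 hu).2 (h ▸ hx), (mem_sdiff.1 hu).1⟩

end

variable (hs : G.ConnectedWithin s) (hX : G.IsFlap s c {x})
include hs hX

lemma pendant : G.Adj x c ∧ ∀ y ∈ s, G.Adj x y → y = c := by
  refine ⟨?_, fun y hy hxy => ?_⟩
  · obtain ⟨y, hy, hxy⟩ := (hX.reachWithin_insert hs (mem_singleton_self x)).exists_adj
      fun h => hX.center_notMem (h ▸ mem_singleton_self x)
    obtain rfl : y = c := by simpa [hxy.ne'] using hy
    exact hxy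
  · simpa [hxy.ne'] using hX.adj_mem x (mem_singleton_self x) y hy hxy

lemma isIndepSet_insert (hJ : J ⊆ s) (hcJ : c ∉ J) (hJind : G.IsIndepSet (J : Set V)) :
    G.IsIndepSet (insert x J : Finset V) := by
  have hxJ : ∀ y ∈ J, ¬ G.Adj x y :=
    fun y hy hxy => hcJ ((hX.pendant hs).2 y (hJ hy) hxy ▸ hy)
  rw [coe_insert, IsIndepSet, Set.pairwise_insert]
  exact ⟨hJind, fun y hy _ => ⟨hxJ y hy, fun hyx => hxJ y hy hyx.symm⟩⟩

/-- Removing `x` and `c` together makes at most one new non-cut vertex: a neighbour `y` of `c`,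
through which `x` and `c` reach the rest. -/
lemma card_nonCutVertices_sdiff_erase_le (hx : x ∈ G.nonCutVertices s) :
    #(G.nonCutVertices ((s \ {x}).erase c)) ≤ #(G.nonCutVertices s) := by
  set t := (s \ {x}).erase c
  obtain ht | ⟨z, hz⟩ := t.eq_empty_or_nonempty
  · simp [ht, nonCutVertices]
  have hc : c ∈ s \ {x} := mem_sdiff.2 ⟨hX.center_mem, by simpa using hX.center_notMem⟩
  obtain ⟨y, hy, hcy⟩ := (hX.connectedWithin_sdiff hs c hc z (mem_of_mem_erase hz)).exists_adj
    (mem_erase.1 hz).1.symm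
  have hyt : y ∈ t := mem_erase.2 ⟨hcy.ne', hy⟩
  have hsub : (G.nonCutVertices t).erase y ⊆ (G.nonCutVertices s).erase x := by
    refine fun v hv => mem_erase.2 ⟨fun h => ?_, erase_nonCutVertices_subset ?_ hyt ?_ hv⟩
    · simpa [t, h] using nonCutVertices_subset (mem_of_mem_erase hv)
    · exact (erase_subset _ _).trans sdiff_subset
    intro w hw v hvt hvy
    obtain ⟨hvc, hvs⟩ := mem_erase.1 hvt
    have hvx : v ≠ x := by simpa using (mem_sdiff.1 hvs).2
    have hcv : c ∈ s.erase v := mem_erase.2 ⟨hvc.symm, hX.center_mem⟩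
    have hcy' : G.ReachWithin (s.erase v) c y :=
      .single ⟨hcv, mem_erase.2 ⟨hvy.symm, (mem_sdiff.1 hy).1⟩, hcy⟩
    obtain rfl | rfl : w = x ∨ w = c := by
      have := mem_sdiff.1 hw
      simp only [t, mem_erase, mem_sdiff, mem_singleton] at this
      tauto
    · exact .head ⟨mem_erase.2 ⟨hvx.symm, hX.subset (mem_singleton_self _)⟩, hcv,
        (hX.pendant hs).1⟩ hcy'
    · exact hcy'
  have h1 := card_le_card hsub
  have h2 := pred_card_le_card_erase (s := G.nonCutVertices t) (a := y)
  have h3 := card_erase_add_one hx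
  omega

end IsFlap

variable (G) in
def IndepBound (s : Finset V) : Prop :=
  ∃ I ⊆ s, G.IsIndepSet (I : Set V) ∧ #s ≤ 2 * #I + 8 * #(G.nonCutVertices s)

lemma indepBound_of_forall_connectedWithin_erase
    (h : ∀ v ∈ s, G.ConnectedWithin (s.erase v)) : G.IndepBound s := by
  refine ⟨∅, empty_subset _, by simp [IsIndepSet], ?_⟩
  have := card_le_card fun v hv => mem_nonCutVertices.2 ⟨hv, h v hv⟩
  simp only [card_empty]
  omega

namespace IsFlap

variable (hs : G.ConnectedWithin s)
include hs

lemma indepBound_of_sdiff (hX : G.IsFlap s c X) (hXn : X ⊆ G.nonCutVertices s)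
    (hX2 : 2 ≤ #X) (h : G.IndepBound (s \ X)) : G.IndepBound s := by
  obtain ⟨I, hIs, hI, hcard⟩ := h
  refine ⟨I, hIs.trans sdiff_subset, hI, ?_⟩
  have h1 := card_sdiff_add_card_eq_card hX.subset
  have h2 := card_le_card (hX.erase_nonCutVertices_sdiff_subset hs)
  have h3 := pred_card_le_card_erase (s := G.nonCutVertices (s \ X)) (a := c)
  have h4 := card_sdiff_add_card_eq_card hXn
  omega

lemma indepBound_of_sdiff_singleton (hX : G.IsFlap s c {x})
    (hx : x ∈ G.nonCutVertices s) (hc : c ∉ G.nonCutVertices (s \ {x}))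
    (h : G.IndepBound (s \ {x})) : G.IndepBound s := by
  obtain ⟨I, hIs, hI, hcard⟩ := h
  have hIs' : I.erase c ⊆ s := (erase_subset _ _).trans (hIs.trans sdiff_subset)
  have hxI : x ∉ I.erase c := fun h => by simpa using hIs (mem_of_mem_erase h)
  refine ⟨insert x (I.erase c), insert_subset (hX.subset (mem_singleton_self x)) hIs',
    hX.isIndepSet_insert hs hIs' (notMem_erase c I) (hI.mono (by simp)), ?_⟩
  have h1 := card_sdiff_add_card_eq_card hX.subset
  have h2 := card_le_card (hX.erase_nonCutVertices_sdiff_subset hs)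
  rw [erase_eq_of_notMem hc] at h2
  have h3 := card_sdiff_add_card_eq_card (singleton_subset_iff.2 hx)
  have h4 := card_insert_of_notMem hxI
  have h5 := pred_card_le_card_erase (s := I) (a := c)
  simp only [card_singleton] at h1 h3
  omega

lemma indepBound_of_sdiff_singleton_erase (hX : G.IsFlap s c {x})
    (hx : x ∈ G.nonCutVertices s) (h : G.IndepBound ((s \ {x}).erase c)) :
    G.IndepBound s := by
  obtain ⟨I, hIs, hI, hcard⟩ := h
  have hIs' : I ⊆ s := hIs.trans ((erase_subset _ _).trans sdiff_subset)
  have hxI : x ∉ I := fun h => by simpa using mem_of_mem_erase (hIs h)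
  refine ⟨insert x I, insert_subset (hX.subset (mem_singleton_self x)) hIs',
    hX.isIndepSet_insert hs hIs' (fun h => by simpa using hIs h) hI, ?_⟩
  have hc : c ∈ s \ {x} := mem_sdiff.2 ⟨hX.center_mem, by simpa using hX.center_notMem⟩
  have h1 := card_sdiff_add_card_eq_card hX.subset
  have h2 := card_erase_add_one hc
  have h3 := hX.card_nonCutVertices_sdiff_erase_le hs hx
  have h4 := card_insert_of_notMem hxI
  simp only [card_singleton] at h1
  omega

end IsFlap

theorem ConnectedWithin.indepBound (hs : G.ConnectedWithin s) : G.IndepBound s := by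
  induction s using Finset.strongInduction with
  | H s ih =>
  by_cases hcut : ∀ v ∈ s, G.ConnectedWithin (s.erase v)
  · exact indepBound_of_forall_connectedWithin_erase hcut
  push Not at hcut
  obtain ⟨c₀, hc₀, hc₀cut⟩ := hcut
  obtain ⟨a, ha⟩ : (s.erase c₀).Nonempty :=
    nonempty_iff_ne_empty.2 fun h => hc₀cut (by simp [h, ConnectedWithin])
  obtain ⟨c, X, hX, hXn⟩ := (isFlap_componentWithin hc₀ ha).exists_subset_nonCutVertices hs
  have hsX := ih _ (sdiff_ssubset hX.subset hX.nonempty) (hX.connectedWithin_sdiff hs)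
  obtain ⟨x, rfl⟩ | hX2 := hX.nonempty.exists_eq_singleton_or_nontrivial
  · have hx := hXn (mem_singleton_self x)
    by_cases hc : c ∈ G.nonCutVertices (s \ {x})
    · exact hX.indepBound_of_sdiff_singleton_erase hs hx <| ih _
        ((erase_subset _ _).trans_ssubset (sdiff_ssubset hX.subset hX.nonempty))
        (mem_nonCutVertices.1 hc).2
    · exact hX.indepBound_of_sdiff_singleton hs hx hc hsX
  · exact hX.indepBound_of_sdiff hs hXn (one_lt_card_iff_nontrivial.2 hX2) hsX

end SimpleGraph

open Real

namespace Complex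

lemma norm_sub_le_one_of_abs_arg_sub_le {a b : ℂ} (ha : ‖a‖ ≤ 1) (hb : ‖b‖ ≤ 1)
    (hab : |arg a - arg b| ≤ π / 3) : ‖a - b‖ ≤ 1 := by
  have hcos : 1 / 2 ≤ Real.cos (arg a - arg b) := by
    rw [← Real.cos_abs, ← Real.cos_pi_div_three]
    exact Real.cos_le_cos_of_nonneg_of_le_pi (abs_nonneg _) (by linarith [pi_pos]) hab
  have hlaw : ‖a - b‖ ^ 2 =
      ‖a‖ ^ 2 + ‖b‖ ^ 2 - 2 * (‖a‖ * ‖b‖) * Real.cos (arg a - arg b) := by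
    rw [Complex.sq_norm, normSq_apply, sub_re, sub_im, ← norm_mul_cos_arg a,
      ← norm_mul_sin_arg a, ← norm_mul_cos_arg b, ← norm_mul_sin_arg b, Real.cos_sub]
    linear_combination ‖a‖ ^ 2 * Real.sin_sq_add_cos_sq (arg a) +
      ‖b‖ ^ 2 * Real.sin_sq_add_cos_sq (arg b)
  have hab0 : 0 ≤ ‖a‖ * ‖b‖ := by positivity
  refine (sq_le_one_iff₀ (norm_nonneg _)).1 ?_
  rw [hlaw]
  nlinarith [mul_nonneg (sub_nonneg.2 ha) (sub_nonneg.2 hb), norm_nonneg a, norm_nonneg b]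

/-- Pigeonhole over the six sectors of angle `π / 3` around `o`. -/
lemma card_le_six_of_pairwise_one_lt_dist {o : ℂ} {T : Finset ℂ} (hT : ∀ z ∈ T, dist z o ≤ 1)
    (hsep : (T : Set ℂ).Pairwise fun z w => 1 < dist z w) : #T ≤ 6 := by
  by_contra! h
  set sector : ℂ → ℤ := fun z => ⌊(π - arg (z - o)) * (3 / π)⌋
  have hmaps : Set.MapsTo sector T (Ico (0 : ℤ) 6) := by
    intro z _
    have h1 := neg_pi_lt_arg (z - o)
    have h2 := arg_le_pi (z - o)
    simp only [coe_Ico, Set.mem_Ico, sector, Int.floor_nonneg, Int.floor_lt]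
    constructor
    · have : 0 ≤ π - arg (z - o) := by linarith
      positivity
    · rw [← lt_div_iff₀ (by positivity)]
      field_simp
      push_cast
      linarith
  obtain ⟨z, hz, w, hw, hzw, hsec⟩ :=
    exists_ne_map_eq_of_card_lt_of_maps_to (by simpa using h) hmaps
  have hang : |arg (z - o) - arg (w - o)| ≤ π / 3 := by
    have := Int.abs_sub_lt_one_of_floor_eq_floor hsec
    rw [← sub_mul, sub_sub_sub_cancel_left, abs_mul, abs_of_pos (by positivity : 0 < 3 / π),
      ← lt_div_iff₀ (by positivity), one_div_div, abs_sub_comm] at this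
    exact this.le
  have := norm_sub_le_one_of_abs_arg_sub_le (by simpa [dist_eq] using hT z hz)
    (by simpa [dist_eq] using hT w hw) hang
  rw [sub_sub_sub_cancel_right, ← dist_eq] at this
  exact (hsep hz hw hzw).not_ge this

end Complex

namespace EuclideanSpace

lemma card_le_six_of_pairwise_one_lt_dist {o : EuclideanSpace ℝ (Fin 2)}
    {T : Finset (EuclideanSpace ℝ (Fin 2))} (hT : ∀ z ∈ T, dist z o ≤ 1)
    (hsep : (T : Set (EuclideanSpace ℝ (Fin 2))).Pairwise fun z w => 1 < dist z w) :
    #T ≤ 6 := by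
  classical
  set f := Complex.orthonormalBasisOneI.repr.symm
  rw [← card_image_of_injective T f.injective]
  refine Complex.card_le_six_of_pairwise_one_lt_dist (o := f o) ?_ ?_
  · simpa using hT
  · simpa [Set.Pairwise, f.injective.eq_iff] using hsep

lemma card_le_six_mul_card {T C : Finset (EuclideanSpace ℝ (Fin 2))}
    (hsep : (T : Set (EuclideanSpace ℝ (Fin 2))).Pairwise fun z w => 1 < dist z w)
    (hcov : ∀ z ∈ T, ∃ c ∈ C, dist z c ≤ 1) : #T ≤ 6 * #C := by
  classical
  calc #T ≤ #(C.biUnion fun c => {z ∈ T | dist z c ≤ 1}) := by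
        refine card_le_card fun z hz => ?_
        obtain ⟨c, hc, hzc⟩ := hcov z hz
        exact mem_biUnion.2 ⟨c, hc, mem_filter.2 ⟨hz, hzc⟩⟩
    _ ≤ ∑ c ∈ C, #{z ∈ T | dist z c ≤ 1} := card_biUnion_le
    _ ≤ ∑ _c ∈ C, 6 := sum_le_sum fun c _ =>
        card_le_six_of_pairwise_one_lt_dist (fun z hz => (mem_filter.1 hz).2)
          (hsep.mono fun z hz => (mem_filter.1 hz).1)
    _ = 6 * #C := by rw [sum_const, smul_eq_mul, mul_comm]

end EuclideanSpace

open SimpleGraph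

namespace pendantUnitDiskGraph

variable {P P₀ : Finset (EuclideanSpace ℝ (Fin 2))}

/-- Dummy vertices are placed at their points, so every edge has length at most `1`. -/
def position : {p // p ∈ P} ⊕ {p // p ∈ P₀} → EuclideanSpace ℝ (Fin 2) :=
  Sum.elim Subtype.val Subtype.val

lemma dist_position_le_one_of_adj {v w : {p // p ∈ P} ⊕ {p // p ∈ P₀}}
    (h : (pendantUnitDiskGraph P P₀).Adj v w) : dist (position v) (position w) ≤ 1 := by
  rcases v with p | u <;> rcases w with q | u'
  · exact h.2
  · simp [position, show (p : EuclideanSpace ℝ (Fin 2)) = u' from h]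
  · simp [position, show (q : EuclideanSpace ℝ (Fin 2)) = u from h]
  · exact h.elim

lemma injOn_position : Set.InjOn (position (P := P) (P₀ := P₀)) (Set.range Sum.inl) := by
  rintro _ ⟨p, rfl⟩ _ ⟨q, rfl⟩ h
  exact congrArg Sum.inl (Subtype.ext h)

/-- A non-cut vertex of `D` is, by (iii), the only member of `D` covering some user, hence sits
at that user's point. -/
lemma card_nonCutVertices_le {D : Finset {p // p ∈ P}} (hD : 1 < #D)
    (hcov : ∀ u : {p // p ∈ P₀}, ∃ d ∈ D,
      (pendantUnitDiskGraph P P₀).Adj (Sum.inr u) (Sum.inl d))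
    (hfixed : ∀ v ∈ D,
      ¬ ((pendantUnitDiskGraph P P₀).induce
          (Sum.inl '' ((↑D : Set {p // p ∈ P}) \ {v}))).Connected ∨
      ∃ u : {p // p ∈ P₀}, ∀ d ∈ D, d ≠ v →
        ¬ (pendantUnitDiskGraph P P₀).Adj (Sum.inr u) (Sum.inl d)) :
    #((pendantUnitDiskGraph P P₀).nonCutVertices (D.image Sum.inl)) ≤ #P₀ := by
  classical
  refine card_le_card_of_injOn position (fun v hv => ?_)
    (injOn_position.mono fun v hv => ?_)
  · obtain ⟨hvS, hconn⟩ := mem_nonCutVertices.1 hv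
    obtain ⟨d, hd, rfl⟩ := mem_image.1 hvS
    rcases hfixed d hd with hdisc | ⟨u, hu⟩
    · refine absurd ?_ hdisc
      have hne : ((D.image Sum.inl).erase (Sum.inl d) :
          Finset ({p // p ∈ P} ⊕ {p // p ∈ P₀})).Nonempty := by
        rw [← card_pos, card_erase_of_mem hvS, card_image_of_injective _ Sum.inl_injective]
        omega
      rw [← coe_erase, ← coe_image, image_erase Sum.inl_injective]
      exact hconn.connected_induce hne
    · obtain ⟨d', hd', hadj⟩ := hcov u
      obtain rfl : d' = d := by_contra fun h => hu d' hd' h hadj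
      simp [position, show (d' : EuclideanSpace ℝ (Fin 2)) = u from hadj]
  · obtain ⟨d, -, rfl⟩ := mem_image.1 (nonCutVertices_subset (mem_coe.1 hv))
    exact ⟨d, rfl⟩

variable {OPT : Finset ({p // p ∈ P} ⊕ {p // p ∈ P₀})}
  (hdom : ∀ v, v ∉ OPT → ∃ d ∈ OPT, (pendantUnitDiskGraph P P₀).Adj v d)
include hdom

lemma exists_dist_position_le_one (v : {p // p ∈ P} ⊕ {p // p ∈ P₀}) :
    ∃ w ∈ OPT, dist (position v) (position w) ≤ 1 := by
  by_cases hv : v ∈ OPT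
  · exact ⟨v, hv, by simp⟩
  · obtain ⟨w, hw, hvw⟩ := hdom v hv
    exact ⟨w, hw, dist_position_le_one_of_adj hvw⟩

lemma card_pendants_le_card_of_dominating : #P₀ ≤ #OPT := by
  classical
  refine (card_le_card fun u hu => ?_).trans (card_image_le (s := OPT) (f := position))
  by_cases hu' : Sum.inr ⟨u, hu⟩ ∈ OPT
  · exact mem_image.2 ⟨_, hu', rfl⟩
  · obtain ⟨p | u', hw, h⟩ := hdom _ hu'
    · exact mem_image.2 ⟨_, hw, h⟩
    · exact h.elim

lemma card_le_six_mul_card_of_isIndepSet {I : Finset ({p // p ∈ P} ⊕ {p // p ∈ P₀})}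
    (hI : ∀ v ∈ I, v ∈ Set.range Sum.inl)
    (hind : (pendantUnitDiskGraph P P₀).IsIndepSet (I : Set _)) : #I ≤ 6 * #OPT := by
  classical
  rw [← card_image_of_injOn (injOn_position.mono fun v hv => hI v hv)]
  refine (EuclideanSpace.card_le_six_mul_card (C := OPT.image position) ?_ ?_).trans
    (Nat.mul_le_mul_left 6 card_image_le)
  · rintro _ hv _ hw hvw
    obtain ⟨v, hvI, rfl⟩ := mem_image.1 hv
    obtain ⟨w, hwI, rfl⟩ := mem_image.1 hw
    obtain ⟨p, rfl⟩ := hI _ hvI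
    obtain ⟨q, rfl⟩ := hI _ hwI
    have hpq : p ≠ q := fun h => hvw (h ▸ rfl)
    have : ¬ (p ≠ q ∧ dist (p : EuclideanSpace ℝ (Fin 2)) q ≤ 1) :=
      hind hvI hwI fun h => hpq (Sum.inl_injective h)
    simpa [position, hpq] using this
  · rintro _ hv
    obtain ⟨v, -, rfl⟩ := mem_image.1 hv
    obtain ⟨w, hw, hvw⟩ := exists_dist_position_le_one hdom v
    exact ⟨_, mem_image_of_mem _ hw, hvw⟩

end pendantUnitDiskGraph

open pendantUnitDiskGraph

theorem card_le_twenty_opt_add_four_general (P P₀ : Finset (EuclideanSpace ℝ (Fin 2)))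
    (D : Finset {p // p ∈ P})
    (hconn : ((pendantUnitDiskGraph P P₀).induce
      (Sum.inl '' (↑D : Set {p // p ∈ P}))).Connected)
    (hcov : ∀ u : {p // p ∈ P₀}, ∃ d ∈ D,
      (pendantUnitDiskGraph P P₀).Adj (Sum.inr u) (Sum.inl d))
    (hfixed : ∀ v ∈ D,
      ¬ ((pendantUnitDiskGraph P P₀).induce
          (Sum.inl '' ((↑D : Set {p // p ∈ P}) \ {v}))).Connected ∨
      ∃ u : {p // p ∈ P₀}, ∀ d ∈ D, d ≠ v →
        ¬ (pendantUnitDiskGraph P P₀).Adj (Sum.inr u) (Sum.inl d))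
    (OPT : Finset ({p // p ∈ P} ⊕ {p // p ∈ P₀}))
    (hOPTdom : ∀ v : {p // p ∈ P} ⊕ {p // p ∈ P₀}, v ∉ OPT →
      ∃ d ∈ OPT, (pendantUnitDiskGraph P P₀).Adj v d) :
    D.card ≤ 20 * OPT.card + 4 := by
  classical
  obtain hD | hD := le_or_gt #D 1
  · omega
  have hS : (pendantUnitDiskGraph P P₀).ConnectedWithin (D.image Sum.inl) :=
    connectedWithin_of_preconnected_induce (by rw [coe_image]; exact hconn.preconnected)
  obtain ⟨I, hIS, hI, hcard⟩ := hS.indepBound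
  have hI6 : #I ≤ 6 * #OPT := card_le_six_mul_card_of_isIndepSet hOPTdom
    (fun v hv => by obtain ⟨d, -, rfl⟩ := mem_image.1 (hIS hv); exact ⟨d, rfl⟩) hI
  have hL := card_nonCutVertices_le hD hcov hfixed
  have hP₀ := card_pendants_le_card_of_dominating hOPTdom
  rw [card_image_of_injective _ Sum.inl_injective] at hcard
  omega

/-- Paper's Theorem 3: Let `D ⊆ P` satisfy (i) the subgraph of the
pendant-augmented unit disk graph `G_r` induced by `D` is connected, (ii) every dummy vertex
is adjacent to some vertex of `D`, and (iii) every `v ∈ D` is "fixed": removing `v` from `D`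
either disconnects the induced subgraph or leaves some dummy vertex with no neighbor in
`D \ {v}`. Then for every nonempty connected dominating set `OPT` of `G_r`,
`|D| ≤ 20|OPT| + 4`. -/
theorem card_le_twenty_opt_add_four (P P₀ : Finset (EuclideanSpace ℝ (Fin 2)))
    (hP : P.Nonempty) (hP₀ : P₀ ⊆ P)
    (D : Finset {p // p ∈ P})
    (hconn : ((pendantUnitDiskGraph P P₀).induce
      (Sum.inl '' (↑D : Set {p // p ∈ P}))).Connected)
    (hcov : ∀ u : {p // p ∈ P₀}, ∃ d ∈ D,
      (pendantUnitDiskGraph P P₀).Adj (Sum.inr u) (Sum.inl d))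
    (hfixed : ∀ v ∈ D,
      ¬ ((pendantUnitDiskGraph P P₀).induce
          (Sum.inl '' ((↑D : Set {p // p ∈ P}) \ {v}))).Connected ∨
      ∃ u : {p // p ∈ P₀}, ∀ d ∈ D, d ≠ v →
        ¬ (pendantUnitDiskGraph P P₀).Adj (Sum.inr u) (Sum.inl d))
    (OPT : Finset ({p // p ∈ P} ⊕ {p // p ∈ P₀})) (hOPTne : OPT.Nonempty)
    (hOPTdom : ∀ v : {p // p ∈ P} ⊕ {p // p ∈ P₀}, v ∉ OPT →
      ∃ d ∈ OPT, (pendantUnitDiskGraph P P₀).Adj v d)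
    (hOPTconn : ((pendantUnitDiskGraph P P₀).induce
      (↑OPT : Set ({p // p ∈ P} ⊕ {p // p ∈ P₀}))).Connected) :
    D.card ≤ 20 * OPT.card + 4 :=
  card_le_twenty_opt_add_four_general P P₀ D hconn hcov hfixed OPT hOPTdom
end
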